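/- arXiv:1306.6613 — 2 statements merged into one kernel-verified Lean document; each statement's English description precedes it below -/
import Mathlib

section
/- The group PGL(2,ℤ) has exactly 5 conjugacy classes of elements of finite order, represented by the images of I, [[0,−1],[1,0]], [[0,1],[1,0]], diag(−1,1), and [[0,−1],[1,1]], of orders 1, 2, 2, 2, 3 respectively; moreover every finite subgroup of PGL(2,ℤ) is conjugate to a subgroup of one of two dihedral subgroups of orders 4 and 6: the images of ⟨[[0,−1],[1,0]], [[0,1],[1,0]]⟩ and ⟨[[0,−1],[1,1]], [[0,1],[1,0]]⟩. -/
/-- An element of `GL(2,ℤ)` from a matrix and an explicit inverse. -/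
def mkGL (M N : Matrix (Fin 2) (Fin 2) ℤ) (h1 : M * N = 1) (h2 : N * M = 1) :
    Matrix.GeneralLinearGroup (Fin 2) ℤ :=
  ⟨M, N, h1, h2⟩

/-- `−I` in `GL(2,ℤ)`. -/
def matNegI : Matrix.GeneralLinearGroup (Fin 2) ℤ :=
  mkGL !![-1, 0; 0, -1] !![-1, 0; 0, -1] (by decide) (by decide)

/-- The central subgroup `{±I}` of `GL(2,ℤ)`. -/
def pmOne : Subgroup (Matrix.GeneralLinearGroup (Fin 2) ℤ) :=
  Subgroup.closure {matNegI}

lemma pmOne_le_center : pmOne ≤ Subgroup.center (Matrix.GeneralLinearGroup (Fin 2) ℤ) := by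
  rw [pmOne, Subgroup.closure_le]
  intro x hx
  rw [Set.mem_singleton_iff] at hx
  subst hx
  rw [SetLike.mem_coe, Subgroup.mem_center_iff]
  intro g
  apply Units.ext
  show (g : Matrix (Fin 2) (Fin 2) ℤ) * (matNegI : Matrix (Fin 2) (Fin 2) ℤ)
      = (matNegI : Matrix (Fin 2) (Fin 2) ℤ) * (g : Matrix (Fin 2) (Fin 2) ℤ)
  have h : (matNegI : Matrix (Fin 2) (Fin 2) ℤ) = -1 := by decide
  rw [h, mul_neg, neg_mul, mul_one, one_mul]

instance : pmOne.Normal := by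
  constructor
  intro x hx g
  have hc := pmOne_le_center hx
  rw [Subgroup.mem_center_iff] at hc
  rw [hc g, mul_assoc, mul_inv_cancel, mul_one]
  exact hx

/-- `PGL(2,ℤ) = GL(2,ℤ)/{±I}`. -/
def PGL2Z := Matrix.GeneralLinearGroup (Fin 2) ℤ ⧸ pmOne

instance : Group PGL2Z := QuotientGroup.Quotient.group pmOne

/-- The projection `GL(2,ℤ) → PGL(2,ℤ)`. -/
def pglMk : Matrix.GeneralLinearGroup (Fin 2) ℤ →* PGL2Z := QuotientGroup.mk' pmOne

/-- The five representatives `I`, `[[0,−1],[1,0]]`, `[[0,1],[1,0]]`, `diag(−1,1)`,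
`[[0,−1],[1,1]]`. -/
def pglReps : Fin 5 → Matrix.GeneralLinearGroup (Fin 2) ℤ :=
  ![mkGL !![1, 0; 0, 1] !![1, 0; 0, 1] (by decide) (by decide),
    mkGL !![0, -1; 1, 0] !![0, 1; -1, 0] (by decide) (by decide),
    mkGL !![0, 1; 1, 0] !![0, 1; 1, 0] (by decide) (by decide),
    mkGL !![-1, 0; 0, 1] !![-1, 0; 0, 1] (by decide) (by decide),
    mkGL !![0, -1; 1, 1] !![1, 1; -1, 0] (by decide) (by decide)]

/-- The image in `PGL(2,ℤ)` of the dihedral group `⟨[[0,−1],[1,0]], [[0,1],[1,0]]⟩`;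
it has order 4. -/
def pglD₁ : Subgroup PGL2Z :=
  Subgroup.map pglMk (Subgroup.closure {pglReps 1, pglReps 2})

/-- The image in `PGL(2,ℤ)` of the dihedral group `⟨[[0,−1],[1,1]], [[0,1],[1,0]]⟩`;
it has order 6. -/
def pglD₂ : Subgroup PGL2Z :=
  Subgroup.map pglMk (Subgroup.closure {pglReps 4, pglReps 2})
set_option maxHeartbeats 1000000

abbrev GL2 := Matrix.GeneralLinearGroup (Fin 2) ℤ
open scoped Matrix in
abbrev _dummyMat := (0:Matrix (Fin 2) (Fin 2) ℤ)ᵀ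

abbrev Mat2 := Matrix (Fin 2) (Fin 2) ℤ

lemma matNegI_eq : matNegI = (-1 : GL2) := by
  apply Units.ext
  rw [Units.val_neg, Units.val_one]
  decide

lemma pmOne_mem_iff {x : GL2} : x ∈ pmOne ↔ x = 1 ∨ x = -1 := by
  constructor
  · intro hx
    rw [pmOne, ← Subgroup.zpowers_eq_closure] at hx
    obtain ⟨k, rfl⟩ := hx
    have h2m : matNegI * matNegI = 1 := by
      apply Units.ext; decide
    have h2 : matNegI ^ (2:ℤ) = 1 := by
      rw [show (2:ℤ) = 1 + 1 from rfl, zpow_add, zpow_one, h2m]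
    rcases Int.even_or_odd k with ⟨t, rfl⟩ | ⟨t, rfl⟩
    · left
      show matNegI ^ (t + t) = 1
      rw [show t + t = 2 * t by ring, zpow_mul, h2, one_zpow]
    · right
      show matNegI ^ (2 * t + 1) = -1
      rw [zpow_add, zpow_mul, h2, one_zpow, one_mul, zpow_one, matNegI_eq]
  · rintro (rfl | rfl)
    · exact one_mem _
    · rw [← matNegI_eq]; exact Subgroup.subset_closure rfl

lemma pglMk_eq_iff {x y : GL2} : pglMk x = pglMk y ↔ x = y ∨ x = -y := by
  have h := @QuotientGroup.mk'_eq_mk' _ _ pmOne _ x y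
  rw [show (QuotientGroup.mk' pmOne) x = pglMk x from rfl,
    show (QuotientGroup.mk' pmOne) y = pglMk y from rfl] at h
  refine h.trans ?_
  constructor
  · rintro ⟨z, hz, rfl⟩
    rcases pmOne_mem_iff.1 hz with rfl | rfl
    · left; rw [mul_one]
    · right; rw [mul_neg, mul_one, neg_neg]
  · rintro (rfl | rfl)
    · exact ⟨1, one_mem _, mul_one _⟩
    · exact ⟨-1, pmOne_mem_iff.2 (Or.inr rfl), by rw [mul_neg, neg_mul, neg_neg, mul_one]⟩

lemma pglMk_eq_one_iff {x : GL2} : pglMk x = 1 ↔ x = 1 ∨ x = -1 := by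
  have := @pglMk_eq_iff x 1
  rw [map_one] at this; exact this

lemma pglMk_surj : Function.Surjective pglMk := QuotientGroup.mk'_surjective pmOne
def gS : GL2 := pglReps 1
def gJ : GL2 := pglReps 2
def gK : GL2 := pglReps 3
def gR : GL2 := pglReps 4

lemma gS_val : gS.val = !![0,-1;1,0] := rfl
lemma gJ_val : gJ.val = !![0,1;1,0] := rfl
lemma gK_val : gK.val = !![-1,0;0,1] := rfl
lemma gR_val : gR.val = !![0,-1;1,1] := rfl

def D8f : Finset Mat2 :=
  {!![1,0;0,1], !![-1,0;0,-1], !![0,-1;1,0], !![0,1;-1,0],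
   !![0,1;1,0], !![0,-1;-1,0], !![-1,0;0,1], !![1,0;0,-1]}

def D12f : Finset Mat2 :=
  {!![1,0;0,1], !![-1,0;0,-1], !![0,-1;1,1], !![0,1;-1,-1],
   !![-1,-1;1,0], !![1,1;-1,0], !![0,1;1,0], !![0,-1;-1,0],
   !![-1,0;1,1], !![1,0;-1,-1], !![-1,-1;0,1], !![1,1;0,-1]}

lemma D8f_mul : ∀ A ∈ D8f, ∀ B ∈ D8f, A * B ∈ D8f := by decide
lemma D12f_mul : ∀ A ∈ D12f, ∀ B ∈ D12f, A * B ∈ D12f := by decide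
lemma D8f_inv : ∀ A ∈ D8f, ∃ B ∈ D8f, A * B = 1 := by decide
lemma D12f_inv : ∀ A ∈ D12f, ∃ B ∈ D12f, A * B = 1 := by decide

lemma closure_val_mem {gen : Set GL2} {F : Finset Mat2}
    (hgen : ∀ x ∈ gen, x.val ∈ F) (h1 : (1:Mat2) ∈ F)
    (hmul : ∀ A ∈ F, ∀ B ∈ F, A * B ∈ F) (hinv : ∀ A ∈ F, ∃ B ∈ F, A * B = 1)
    {u : GL2} (hu : u ∈ Subgroup.closure gen) : u.val ∈ F := by
  induction hu using Subgroup.closure_induction with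
  | mem x hx => exact hgen x hx
  | one => exact h1
  | mul x y _ _ hx hy => exact hmul _ hx _ hy
  | inv x _ hx =>
    obtain ⟨B, hB, hAB⟩ := hinv _ hx
    have hBx : B = x⁻¹.val := by
      calc B = (x⁻¹.val * x.val) * B := by rw [Units.inv_mul, Matrix.one_mul]
      _ = x⁻¹.val * (x.val * B) := by rw [Matrix.mul_assoc]
      _ = x⁻¹.val := by rw [hAB, Matrix.mul_one]
    rwa [← hBx]

lemma mem_closure_D8 {u : GL2} (hu : u ∈ Subgroup.closure {gS, gJ}) : u.val ∈ D8f := by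
  refine closure_val_mem ?_ (by decide) D8f_mul D8f_inv hu
  rintro x (rfl | rfl) <;> decide

lemma mem_closure_D12 {u : GL2} (hu : u ∈ Subgroup.closure {gR, gJ}) : u.val ∈ D12f := by
  refine closure_val_mem ?_ (by decide) D12f_mul D12f_inv hu
  rintro x (rfl | rfl) <;> decide

lemma D8_mem_closure {u : GL2} (hu : u.val ∈ D8f) : u ∈ Subgroup.closure {gS, gJ} := by
  have hS : gS ∈ Subgroup.closure {gS, gJ} := Subgroup.subset_closure (by simp)
  have hJ : gJ ∈ Subgroup.closure {gS, gJ} := Subgroup.subset_closure (by simp)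
  simp only [D8f, Finset.mem_insert, Finset.mem_singleton] at hu
  rcases hu with h|h|h|h|h|h|h|h
  · rw [show u = 1 from Units.ext (by rw [h]; decide)]; exact one_mem _
  · rw [show u = gS * gS from Units.ext (by rw [h]; decide)]; exact mul_mem hS hS
  · rw [show u = gS from Units.ext (by rw [h]; decide)]; exact hS
  · rw [show u = gS * gS * gS from Units.ext (by rw [h]; decide)]
    exact mul_mem (mul_mem hS hS) hS
  · rw [show u = gJ from Units.ext (by rw [h]; decide)]; exact hJ
  · rw [show u = gS * gS * gJ from Units.ext (by rw [h]; decide)]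
    exact mul_mem (mul_mem hS hS) hJ
  · rw [show u = gS * gJ from Units.ext (by rw [h]; decide)]; exact mul_mem hS hJ
  · rw [show u = gS * gS * gS * gJ from Units.ext (by rw [h]; decide)]
    exact mul_mem (mul_mem (mul_mem hS hS) hS) hJ

lemma D12_mem_closure {u : GL2} (hu : u.val ∈ D12f) : u ∈ Subgroup.closure {gR, gJ} := by
  have hR : gR ∈ Subgroup.closure {gR, gJ} := Subgroup.subset_closure (by simp)
  have hJ : gJ ∈ Subgroup.closure {gR, gJ} := Subgroup.subset_closure (by simp)
  simp only [D12f, Finset.mem_insert, Finset.mem_singleton] at hu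
  rcases hu with h|h|h|h|h|h|h|h|h|h|h|h
  · rw [show u = 1 from Units.ext (by rw [h]; decide)]; exact one_mem _
  · rw [show u = gR * gR * gR from Units.ext (by rw [h]; decide)]
    exact mul_mem (mul_mem hR hR) hR
  · rw [show u = gR from Units.ext (by rw [h]; decide)]; exact hR
  · rw [show u = gR * gR * gR * gR from Units.ext (by rw [h]; decide)]
    exact mul_mem (mul_mem (mul_mem hR hR) hR) hR
  · rw [show u = gR * gR from Units.ext (by rw [h]; decide)]; exact mul_mem hR hR
  · rw [show u = gR * gR * gR * gR * gR from Units.ext (by rw [h]; decide)]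
    exact mul_mem (mul_mem (mul_mem (mul_mem hR hR) hR) hR) hR
  · rw [show u = gJ from Units.ext (by rw [h]; decide)]; exact hJ
  · rw [show u = gR * gR * gR * gJ from Units.ext (by rw [h]; decide)]
    exact mul_mem (mul_mem (mul_mem hR hR) hR) hJ
  · rw [show u = gR * gJ from Units.ext (by rw [h]; decide)]; exact mul_mem hR hJ
  · rw [show u = gR * gR * gR * gR * gJ from Units.ext (by rw [h]; decide)]
    exact mul_mem (mul_mem (mul_mem (mul_mem hR hR) hR) hR) hJ
  · rw [show u = gR * gR * gJ from Units.ext (by rw [h]; decide)]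
    exact mul_mem (mul_mem hR hR) hJ
  · rw [show u = gR * gR * gR * gR * gR * gJ from Units.ext (by rw [h]; decide)]
    exact mul_mem (mul_mem (mul_mem (mul_mem (mul_mem hR hR) hR) hR) hR) hJ
open scoped Matrix

lemma mat2_eq_iff {x1 x2 x3 x4 y1 y2 y3 y4 : ℤ} :
    (!![x1,x2;x3,x4] : Mat2) = !![y1,y2;y3,y4] ↔ x1=y1 ∧ x2=y2 ∧ x3=y3 ∧ x4=y4 := by
  constructor
  · intro h
    refine ⟨?_, ?_, ?_, ?_⟩
    · simpa using congrFun (congrFun h 0) 0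
    · simpa using congrFun (congrFun h 0) 1
    · simpa using congrFun (congrFun h 1) 0
    · simpa using congrFun (congrFun h 1) 1
  · rintro ⟨rfl, rfl, rfl, rfl⟩; rfl

lemma transform_eq (a b c p q r s : ℤ) :
    (!![p,q;r,s])ᵀ * !![a,b;b,c] * !![p,q;r,s]
      = !![a*p^2+2*b*p*r+c*r^2, a*p*q+b*(p*s+q*r)+c*r*s;
          a*p*q+b*(p*s+q*r)+c*r*s, a*q^2+2*b*q*s+c*s^2] := by
  have ht : (!![p,q;r,s])ᵀ = !![p,r;q,s] := (Matrix.transposeᵣ_eq _).symm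
  rw [ht, Matrix.mul_fin_two, Matrix.mul_fin_two]
  apply mat2_eq_iff.2
  refine ⟨by ring, by ring, by ring, by ring⟩

lemma posdef_pos {a b c : ℤ} (h1 : 0 < a) (h5 : b^2 < a*c) (x y : ℤ)
    (hnz : ¬(x = 0 ∧ y = 0)) : 0 < a*x^2 + 2*b*x*y + c*y^2 := by
  by_cases hy : y = 0
  · subst hy
    have hx : x ≠ 0 := fun h => hnz ⟨h, rfl⟩
    have hx1 : 1 ≤ x^2 := by
      rcases lt_or_gt_of_ne hx with h | h <;> nlinarith
    nlinarith
  · have hy2 : 1 ≤ y^2 := by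
      rcases lt_or_gt_of_ne hy with h | h <;> nlinarith
    nlinarith [sq_nonneg (a*x+b*y)]

lemma one_le_quadmix {u v : ℤ} (hu : 0 ≤ u) (hv : 1 ≤ v) : 1 ≤ u*u - u*v + v*v := by
  by_cases hu0 : u = 0
  · subst hu0; nlinarith
  · have h1u : 1 ≤ u := by omega
    nlinarith [sq_nonneg (u-v)]

lemma abs_one_cases {y : ℤ} (h : |y| = 1) : y = 1 ∨ y = -1 := by
  rcases abs_cases y with ⟨h1, _⟩ | ⟨h1, _⟩ <;> omega

lemma col_sol {a b c : ℤ} (h1 : 0 < a) (h2 : 0 ≤ 2*b) (h3 : 2*b ≤ a) (h4 : a ≤ c)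
    (x y : ℤ) (hnz : ¬(x = 0 ∧ y = 0)) (hE : a*x^2 + 2*b*x*y + c*y^2 = a) :
    (y = 0 ∧ (x = 1 ∨ x = -1)) ∨
    (x = 0 ∧ (y = 1 ∨ y = -1) ∧ a = c) ∨
    (x = -y ∧ (y = 1 ∨ y = -1) ∧ a = c ∧ 2*b = a) := by
  by_cases hy : y = 0
  · subst hy
    have hx : x ≠ 0 := fun h => hnz ⟨h, rfl⟩
    have hx2 : x^2 = 1 := by
      have h' : a*x^2 = a*1 := by linarith [hE]
      exact mul_left_cancel₀ h1.ne' (by linarith)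
    have hfac : (x-1)*(x+1) = 0 := by nlinarith
    rcases mul_eq_zero.1 hfac with h | h
    · exact Or.inl ⟨rfl, Or.inl (by omega)⟩
    · exact Or.inl ⟨rfl, Or.inr (by omega)⟩
  · have hu : 0 ≤ |x| := abs_nonneg x
    have hv : 1 ≤ |y| := by
      rcases lt_or_gt_of_ne hy with h | h
      · rw [abs_of_neg h]; omega
      · rw [abs_of_pos h]; omega
    have hxu : x^2 = |x| * |x| := by rw [abs_mul_abs_self]; ring
    have hyv : y^2 = |y| * |y| := by rw [abs_mul_abs_self]; ring
    have hxy : -(|x| * |y|) ≤ x*y := by rw [← abs_mul]; exact neg_abs_le _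
    have hquad : 1 ≤ |x| * |x| - |x| * |y| + |y| * |y| := one_le_quadmix hu hv
    have hineq : a ≥ a*(|x| * |x|) - a*(|x| * |y|) + c*(|y| * |y|) := by
      have hb : -(2*b*(|x| * |y|)) ≤ 2*b*(x*y) := by
        nlinarith [mul_nonneg (mul_nonneg h2 (abs_nonneg x)) (abs_nonneg y)]
      nlinarith [mul_nonneg (abs_nonneg x) (abs_nonneg y)]
    have hca : c = a := by nlinarith
    subst hca
    have hq1 : |x| * |x| - |x| * |y| + |y| * |y| = 1 := by
      have hle : c*(|x| * |x| - |x| * |y| + |y| * |y|) ≤ c*1 := by nlinarith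
      have := (mul_le_mul_iff_right₀ h1).1 hle
      omega
    have hv1 : |y| = 1 := by nlinarith [sq_nonneg (2 * |x| - |y|)]
    have hux : |x| = 0 ∨ |x| = 1 := by
      have hfac : |x| * (|x| - 1) = 0 := by nlinarith
      rcases mul_eq_zero.1 hfac with h | h
      · exact Or.inl h
      · exact Or.inr (by omega)
    rcases hux with hux | hux
    · exact Or.inr (Or.inl ⟨abs_eq_zero.1 hux, abs_one_cases hv1, rfl⟩)
    · have hxy1 : x*y = 1 ∨ x*y = -1 := by
        apply abs_one_cases; rw [abs_mul, hux, hv1]; norm_num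
      have hEx : c + 2*b*(x*y) + c = c := by
        have hx2 : x^2 = 1 := by rw [hxu, hux]; norm_num
        have hy2 : y^2 = 1 := by rw [hyv, hv1]; norm_num
        nlinarith [hE]
      rcases hxy1 with h | h
      · exfalso; rw [h] at hEx; omega
      · have h2b : 2*b = c := by rw [h] at hEx; omega
        have hxny : x = -y := by
          rcases abs_one_cases hux with rfl | rfl <;>
            rcases abs_one_cases hv1 with h' | h' <;> omega
        exact Or.inr (Or.inr ⟨hxny, abs_one_cases hv1, rfl, h2b⟩)

def shearU (n : ℤ) : GL2 :=
  ⟨!![1,n;0,1], !![1,-n;0,1],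
   by rw [Matrix.mul_fin_two, show (1:Mat2) = !![1,0;0,1] by decide]
      exact mat2_eq_iff.2 ⟨by ring, by ring, by ring, by ring⟩,
   by rw [Matrix.mul_fin_two, show (1:Mat2) = !![1,0;0,1] by decide]
      exact mat2_eq_iff.2 ⟨by ring, by ring, by ring, by ring⟩⟩

def flipU : GL2 := mkGL !![1,0;0,-1] !![1,0;0,-1] (by decide) (by decide)

lemma congr_form (Q g h : Mat2) :
    (g*h)ᵀ * Q * (g*h) = hᵀ * (gᵀ * Q * g) * h := by
  rw [Matrix.transpose_mul]
  simp only [Matrix.mul_assoc]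

lemma reduce_form : ∀ N : ℕ, ∀ a b c : ℤ, a.toNat ≤ N → 0 < a → b^2 < a*c →
    ∃ g : GL2, ∃ a' b' c' : ℤ, g.valᵀ * !![a,b;b,c] * g.val = !![a',b';b',c'] ∧
      0 ≤ 2*b' ∧ 2*b' ≤ a' ∧ a' ≤ c' ∧ 0 < a' ∧ b'^2 < a'*c' := by
  intro N
  induction N with
  | zero => intro a b c hN h1 _; omega
  | succ N ih =>
    intro a b c hN h1 h5
    set q : ℤ := (2*b + a) / (2*a) with hq
    set r : ℤ := (2*b + a) % (2*a) with hr
    have hr0 : 0 ≤ r := Int.emod_nonneg _ (by positivity)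
    have hr1 : r < 2*a := Int.emod_lt_of_pos _ (by linarith)
    have hqr : 2*a * q + r = 2*b + a := Int.mul_ediv_add_emod _ _
    have hqr' : 2*(a*q) + r = 2*b + a := by linarith [hqr, show 2*a*q = 2*(a*q) from by ring]
    set b1 : ℤ := b - a*q with hb1
    have hb1l : -a ≤ 2*b1 := by omega
    have hb1u : 2*b1 < a := by omega
    set c1 : ℤ := a*q^2 - 2*b*q + c with hc1
    have hdet1 : b1^2 < a*c1 := by nlinarith [h5]
    have hform1 : (shearU (-q)).valᵀ * !![a,b;b,c] * (shearU (-q)).val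
        = !![a, b1; b1, c1] := by
      have : (shearU (-q)).val = !![1,-q;0,1] := rfl
      rw [this, transform_eq]
      exact mat2_eq_iff.2 ⟨by ring, by ring, by ring, by ring⟩
    -- flip sign of b1 if needed
    obtain ⟨g2, b2, hform2, hb2l, hb2u, hdet2⟩ :
        ∃ g2 : GL2, ∃ b2 : ℤ, g2.valᵀ * !![a,b1;b1,c1] * g2.val = !![a,b2;b2,c1] ∧
          0 ≤ 2*b2 ∧ 2*b2 ≤ a ∧ b2^2 < a*c1 := by
      by_cases hbs : 0 ≤ b1
      · refine ⟨1, b1, ?_, by omega, by omega, hdet1⟩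
        simp
      · refine ⟨flipU, -b1, ?_, by omega, by omega, by nlinarith [hdet1]⟩
        have : (flipU).val = !![1,0;0,-1] := rfl
        rw [this, transform_eq]
        exact mat2_eq_iff.2 ⟨by ring, by ring, by ring, by ring⟩
    have hc1pos : 0 < c1 := by nlinarith [sq_nonneg b2]
    by_cases hac : a ≤ c1
    · refine ⟨shearU (-q) * g2, a, b2, c1, ?_, hb2l, hb2u, hac, h1, hdet2⟩
      rw [Units.val_mul, congr_form, hform1, hform2]
    · -- swap and recurse
      have hswap : gJ.valᵀ * !![a,b2;b2,c1] * gJ.val = !![c1,b2;b2,a] := by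
        have : gJ.val = !![0,1;1,0] := rfl
        rw [this, transform_eq]
        exact mat2_eq_iff.2 ⟨by ring, by ring, by ring, by ring⟩
      obtain ⟨g3, a', b', c', hform3, h1', h2', h3', h4', h5'⟩ :=
        ih c1 b2 a (by omega) hc1pos (by nlinarith [hdet2])
      refine ⟨shearU (-q) * g2 * gJ * g3, a', b', c', ?_, h1', h2', h3', h4', h5'⟩
      rw [Units.val_mul, congr_form, Units.val_mul, congr_form, Units.val_mul, congr_form,
        hform1, hform2, hswap, hform3]

lemma aut_entries {a b c : ℤ} (M : GL2)
    (hM : M.valᵀ * !![a,b;b,c] * M.val = !![a,b;b,c]) :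
    ∃ p q r s : ℤ, M.val = !![p,q;r,s] ∧
      (a*p^2 + 2*b*p*r + c*r^2 = a) ∧ (a*p*q + b*(p*s+q*r) + c*r*s = b) ∧
      (a*q^2 + 2*b*q*s + c*s^2 = c) ∧ (p*s - q*r = 1 ∨ p*s - q*r = -1) := by
  have h := hM
  rw [Matrix.eta_fin_two M.val, transform_eq, mat2_eq_iff] at h
  refine ⟨M.val 0 0, M.val 0 1, M.val 1 0, M.val 1 1, Matrix.eta_fin_two M.val,
    h.1, h.2.1, h.2.2.2, ?_⟩
  have hdetm : M.val.det * (M⁻¹).val.det = 1 := by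
    rw [← Matrix.det_mul, Units.mul_inv, Matrix.det_one]
  have hu : IsUnit M.val.det := ⟨⟨_, _, hdetm, by rw [mul_comm]; exact hdetm⟩, rfl⟩
  have hdf : M.val.det = M.val 0 0 * M.val 1 1 - M.val 0 1 * M.val 1 0 :=
    Matrix.det_fin_two M.val
  rcases Int.isUnit_iff.1 hu with hh | hh
  · left; rw [← hdf]; exact hh
  · right; rw [← hdf]; exact hh

lemma small_q_zero {A B q : ℤ} (hA : 0 < A) (hB : 0 ≤ 2*B) (hBA : 2*B < A)
    (h : A*q = 2*B ∨ A*q = -(2*B)) : q = 0 := by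
  rcases lt_trichotomy q 0 with h' | h' | h'
  · have hq1 : q ≤ -1 := by omega
    rcases h with h | h <;> nlinarith
  · exact h'
  · have hq1 : 1 ≤ q := by omega
    rcases h with h | h <;> nlinarith

def P0 : GL2 := mkGL !![0,1;1,-1] !![1,1;1,0] (by decide) (by decide)

lemma form_aut {a b c : ℤ} (h1 : 0 < a) (h2 : 0 ≤ 2*b) (h3 : 2*b ≤ a) (h4 : a ≤ c)
    (h5 : b^2 < a*c) :
    ∃ P : GL2,
      (∀ M : GL2, M.valᵀ * !![a,b;b,c] * M.val = !![a,b;b,c] → ((P⁻¹ * M * P).val ∈ D8f)) ∨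
      (∀ M : GL2, M.valᵀ * !![a,b;b,c] * M.val = !![a,b;b,c] → ((P⁻¹ * M * P).val ∈ D12f)) := by
  by_cases hba : 2*b = a
  · by_cases hca : a = c
    · -- hexagonal case : a = c = 2b
      subst hca
      subst hba
      have hb : 0 < b := by omega
      refine ⟨1, Or.inr ?_⟩
      intro M hM
      obtain ⟨p, q, r, s, heta, hE1, hE12, hE2, hdet⟩ := aut_entries M hM
      have hone : ((1:GL2)⁻¹ * M * 1).val = M.val := by simp
      have hnz1 : ¬(p = 0 ∧ r = 0) := by
        rintro ⟨rfl, rfl⟩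
        rcases hdet with h | h <;> omega
      have hnz2 : ¬(q = 0 ∧ s = 0) := by
        rintro ⟨rfl, rfl⟩
        rcases hdet with h | h <;> omega
      have col1 := col_sol h1 h2 (le_refl _) (le_refl _) p r hnz1 hE1
      have col2 := col_sol h1 h2 (le_refl _) (le_refl _) q s hnz2 hE2
      rcases col1 with ⟨hr, hp | hp⟩ | ⟨hp, hr | hr, -⟩ | ⟨hpr, hr | hr, -, -⟩ <;>
        rcases col2 with ⟨hs, hq | hq⟩ | ⟨hq, hs | hs, -⟩ | ⟨hqs, hs | hs, -, -⟩ <;>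
          subst_vars <;>
            first
              | (exfalso; rcases hdet with h | h <;> omega)
              | (exfalso; linarith)
              | (rw [hone, heta]; decide)
    · -- case 2b = a < c
      subst hba
      have hb : 0 < b := by omega
      have hlt : 2*b < c := by omega
      refine ⟨P0, Or.inl ?_⟩
      intro M hM
      obtain ⟨p, q, r, s, heta, hE1, hE12, hE2, hdet⟩ := aut_entries M hM
      have hPMP : (P0⁻¹ * M * P0).val = !![1,1;1,0] * M.val * !![0,1;1,-1] := by
        rw [Units.val_mul, Units.val_mul]; rfl
      have hnz1 : ¬(p = 0 ∧ r = 0) := by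
        rintro ⟨rfl, rfl⟩
        rcases hdet with h | h <;> omega
      have col1 := col_sol h1 h2 (le_refl _) h4 p r hnz1 hE1
      rcases col1 with ⟨hr, hp⟩ | ⟨-, -, hceq⟩ | ⟨-, -, hceq, -⟩
      rotate_left
      · exact absurd hceq (by omega)
      · exact absurd hceq (by omega)
      subst hr
      have hs : s = 1 ∨ s = -1 := by
        rcases hp with rfl | rfl <;> rcases hdet with h | h <;> omega
      have hs2 : s^2 = 1 := by rcases hs with h | h <;> subst h <;> norm_num
      have hfac : q * (2*b*q + 2*b*s) = 0 := by linear_combination hE2 - c*hs2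
      rcases mul_eq_zero.1 hfac with hq0 | hq1
      · subst hq0
        have hps : p*s = 1 := by
          have hh : b*(p*s) = b*1 := by linear_combination hE12
          exact mul_left_cancel₀ hb.ne' hh
        rcases hp with rfl | rfl
        · have hs' : s = 1 := by omega
          subst hs'
          rw [hPMP, heta]; decide
        · have hs' : s = -1 := by omega
          subst hs'
          rw [hPMP, heta]; decide
      · have hq : q = -s := by
          have h2b : (2*b) * (q + s) = 0 := by linear_combination hq1
          rcases mul_eq_zero.1 h2b with h | h <;> omega
        subst hq
        have hps : p*s = -1 := by
          have hh : b*(p*s) = b*(-1) := by linear_combination (-1 : ℤ) * hE12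
          exact mul_left_cancel₀ hb.ne' hh
        rcases hp with rfl | rfl
        · have hs' : s = -1 := by omega
          subst hs'
          rw [hPMP, heta]; decide
        · have hs' : s = 1 := by omega
          subst hs'
          rw [hPMP, heta]; decide
  · -- case 2b < a
    have hba' : 2*b < a := lt_of_le_of_ne h3 hba
    refine ⟨1, Or.inl ?_⟩
    intro M hM
    obtain ⟨p, q, r, s, heta, hE1, hE12, hE2, hdet⟩ := aut_entries M hM
    have hone : ((1:GL2)⁻¹ * M * 1).val = M.val := by simp
    have hnz1 : ¬(p = 0 ∧ r = 0) := by
      rintro ⟨rfl, rfl⟩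
      rcases hdet with h | h <;> omega
    have col1 := col_sol h1 h2 h3 h4 p r hnz1 hE1
    rcases col1 with ⟨hr, hp⟩ | ⟨hp, hrr, hceq⟩ | ⟨-, -, -, hcontra⟩
    · subst hr
      have hs : s = 1 ∨ s = -1 := by
        rcases hp with rfl | rfl <;> rcases hdet with h | h <;> omega
      have hs2 : s^2 = 1 := by rcases hs with h | h <;> subst h <;> norm_num
      have hfac : q * (a*q + 2*b*s) = 0 := by linear_combination hE2 - c*hs2
      have hq0 : q = 0 := by
        rcases mul_eq_zero.1 hfac with h | h
        · exact h
        · apply small_q_zero h1 h2 hba'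
          rcases hs with h' | h' <;> subst h'
          · right; linarith
          · left; linarith
      subst hq0
      rcases hp with rfl | rfl <;> rcases hs with rfl | rfl <;> (rw [hone, heta]; decide)
    · subst hp
      subst hceq
      rcases hrr with rfl | rfl
      · have hq : q = 1 ∨ q = -1 := by rcases hdet with h | h <;> omega
        have hq2 : q^2 = 1 := by rcases hq with h | h <;> subst h <;> norm_num
        have hfac : s * (2*b*q + a*s) = 0 := by linear_combination hE2 - a*hq2
        have hs0 : s = 0 := by
          rcases mul_eq_zero.1 hfac with h | h
          · exact h
          · apply small_q_zero h1 h2 hba'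
            rcases hq with h' | h' <;> subst h'
            · right; linarith
            · left; linarith
        subst hs0
        rcases hq with rfl | rfl <;> (rw [hone, heta]; decide)
      · have hq : q = 1 ∨ q = -1 := by rcases hdet with h | h <;> omega
        have hq2 : q^2 = 1 := by rcases hq with h | h <;> subst h <;> norm_num
        have hfac : s * (2*b*q + a*s) = 0 := by linear_combination hE2 - a*hq2
        have hs0 : s = 0 := by
          rcases mul_eq_zero.1 hfac with h | h
          · exact h
          · apply small_q_zero h1 h2 hba'
            rcases hq with h' | h' <;> subst h'
            · right; linarith
            · left; linarith
        subst hs0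
        rcases hq with rfl | rfl <;> (rw [hone, heta]; decide)
    · exact absurd hcontra hba

lemma pres_conj (Q : Mat2) (g h : GL2) (hp : h.valᵀ * Q * h.val = Q) (M : GL2)
    (hMdef : M = g⁻¹ * h * g) :
    M.valᵀ * (g.valᵀ * Q * g.val) * M.val = g.valᵀ * Q * g.val := by
  have hPM : g.val * M.val = h.val * g.val := by
    rw [hMdef, Units.val_mul, Units.val_mul, ← Matrix.mul_assoc, ← Matrix.mul_assoc,
      Units.mul_inv, Matrix.one_mul]
  calc M.valᵀ * (g.valᵀ * Q * g.val) * M.val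
      = (g.val * M.val)ᵀ * Q * (g.val * M.val) := (congr_form Q g.val M.val).symm
    _ = (h.val * g.val)ᵀ * Q * (h.val * g.val) := by rw [hPM]
    _ = g.valᵀ * (h.valᵀ * Q * h.val) * g.val := congr_form Q h.val g.val
    _ = g.valᵀ * Q * g.val := by rw [hp]

section Avg

variable (H : Subgroup GL2) [Fintype ↥H]

noncomputable def avgQ : Mat2 := ∑ h : ↥H, ((h : GL2).valᵀ * (h : GL2).val)

lemma avgQ_inv {g : GL2} (hg : g ∈ H) :
    g.valᵀ * avgQ H * g.val = avgQ H := by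
  rw [avgQ, Finset.mul_sum, Finset.sum_mul]
  apply Fintype.sum_equiv (Equiv.mulRight (⟨g, hg⟩ : ↥H))
  intro h
  show g.valᵀ * ((h : GL2).valᵀ * (h : GL2).val) * g.val
      = ((h : GL2) * g).valᵀ * ((h : GL2) * g).val
  rw [Units.val_mul, Matrix.transpose_mul]
  simp only [Matrix.mul_assoc]

lemma avgQ_symm_entry : avgQ H 1 0 = avgQ H 0 1 := by
  have h : (avgQ H)ᵀ = avgQ H := by
    rw [avgQ, Matrix.transpose_sum]
    apply Finset.sum_congr rfl
    intro h _
    rw [Matrix.transpose_mul, Matrix.transpose_transpose]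
  conv_lhs => rw [← h]
  rfl

lemma avgQ_entry_sum (i j : Fin 2) :
    avgQ H i j = ∑ h : ↥H, ((h : GL2).val 0 i * (h : GL2).val 0 j
      + (h : GL2).val 1 i * (h : GL2).val 1 j) := by
  rw [avgQ]
  rw [Matrix.sum_apply]
  apply Finset.sum_congr rfl
  intro h _
  rw [Matrix.mul_apply, Fin.sum_univ_two]
  rfl

lemma sum_quad {ι : Type*} [DecidableEq ι] (s : Finset ι) (u v w z : ι → ℤ) (x y : ℤ) :
    (∑ i ∈ s, (u i * u i + w i * w i)) * x^2
      + 2*(∑ i ∈ s, (u i * v i + w i * z i))*x*y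
      + (∑ i ∈ s, (v i * v i + z i * z i))*y^2
    = ∑ i ∈ s, ((u i * x + v i * y)^2 + (w i * x + z i * y)^2) := by
  induction s using Finset.induction_on with
  | empty => simp
  | insert _ _ hx ih =>
    rw [Finset.sum_insert hx, Finset.sum_insert hx, Finset.sum_insert hx,
      Finset.sum_insert hx]
    linear_combination ih

lemma avgQ_quad (x y : ℤ) :
    avgQ H 0 0 * x^2 + 2 * (avgQ H 0 1) * x * y + avgQ H 1 1 * y^2
      = ∑ h : ↥H, (((h : GL2).val 0 0 * x + (h : GL2).val 0 1 * y)^2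
        + ((h : GL2).val 1 0 * x + (h : GL2).val 1 1 * y)^2) := by
  rw [avgQ_entry_sum, avgQ_entry_sum, avgQ_entry_sum]
  classical
  exact sum_quad (Finset.univ : Finset ↥H) (fun h => (h : GL2).val 0 0)
    (fun h => (h : GL2).val 0 1) (fun h => (h : GL2).val 1 0)
    (fun h => (h : GL2).val 1 1) x y

lemma avgQ_quad_pos (x y : ℤ) (hnz : ¬(x = 0 ∧ y = 0)) :
    0 < avgQ H 0 0 * x^2 + 2 * (avgQ H 0 1) * x * y + avgQ H 1 1 * y^2 := by
  rw [avgQ_quad]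
  have h1 : ((1 : ↥H) : GL2).val = (1 : Mat2) := rfl
  have hterm : (((1 : ↥H) : GL2).val 0 0 * x + ((1 : ↥H) : GL2).val 0 1 * y)^2
      + (((1 : ↥H) : GL2).val 1 0 * x + ((1 : ↥H) : GL2).val 1 1 * y)^2 = x^2 + y^2 := by
    rw [h1]
    simp [Matrix.one_apply]
  have hpos : 0 < x^2 + y^2 := by
    rcases not_and_or.1 hnz with h | h
    · have : 1 ≤ x^2 := by
        rcases lt_or_gt_of_ne h with h' | h' <;> nlinarith
      nlinarith [sq_nonneg y]
    · have : 1 ≤ y^2 := by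
        rcases lt_or_gt_of_ne h with h' | h' <;> nlinarith
      nlinarith [sq_nonneg x]
  calc (0:ℤ) < x^2 + y^2 := hpos
    _ = _ := hterm.symm
    _ ≤ _ := Finset.single_le_sum (f := fun h : ↥H =>
        (((h : GL2).val 0 0 * x + (h : GL2).val 0 1 * y)^2
          + ((h : GL2).val 1 0 * x + (h : GL2).val 1 1 * y)^2))
        (fun i _ => by positivity) (Finset.mem_univ 1)

lemma avgQ_pos : 0 < avgQ H 0 0 := by
  have := avgQ_quad_pos H 1 0 (by simp)
  nlinarith [this]

lemma avgQ_det_pos : (avgQ H 0 1)^2 < avgQ H 0 0 * avgQ H 1 1 := by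
  set A := avgQ H 0 0
  set B := avgQ H 0 1
  set C := avgQ H 1 1
  have hA : 0 < A := avgQ_pos H
  have hval := avgQ_quad_pos H (-B) A (by rintro ⟨-, h⟩; omega)
  nlinarith [hval]

lemma avgQ_eta : avgQ H = !![avgQ H 0 0, avgQ H 0 1; avgQ H 0 1, avgQ H 1 1] := by
  conv_lhs => rw [Matrix.eta_fin_two (avgQ H)]
  rw [avgQ_symm_entry]

end Avg

lemma master_GL (H : Subgroup GL2) (hH : Finite ↥H) :
    ∃ g : GL2, (∀ h ∈ H, ((g⁻¹ * h * g).val ∈ D8f)) ∨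
      (∀ h ∈ H, ((g⁻¹ * h * g).val ∈ D12f)) := by
  have : Fintype ↥H := Fintype.ofFinite _
  set A := avgQ H 0 0
  set B := avgQ H 0 1
  set C := avgQ H 1 1
  have hA : 0 < A := avgQ_pos H
  have hdet : B^2 < A*C := avgQ_det_pos H
  obtain ⟨g₀, a', b', c', hform, hb0, hba, hac, ha'pos, hdet'⟩ :=
    reduce_form A.toNat A B C le_rfl hA hdet
  obtain ⟨P, hP⟩ := form_aut ha'pos hb0 hba hac hdet'
  refine ⟨g₀ * P, ?_⟩
  have key : ∀ h ∈ H, (g₀⁻¹ * h * g₀).valᵀ * !![a',b';b',c'] * (g₀⁻¹ * h * g₀).val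
      = !![a',b';b',c'] := by
    intro h hh
    have hinv : h.valᵀ * avgQ H * h.val = avgQ H := avgQ_inv H hh
    have := pres_conj (avgQ H) g₀ h hinv (g₀⁻¹ * h * g₀) rfl
    rw [avgQ_eta H] at this
    rw [← hform]
    exact this
  have hgh : ∀ h : GL2, (g₀ * P)⁻¹ * h * (g₀ * P) = P⁻¹ * (g₀⁻¹ * h * g₀) * P := by
    intro h
    rw [mul_inv_rev]
    group
  rcases hP with hP | hP
  · left
    intro h hh
    rw [hgh h]
    exact hP _ (key h hh)
  · right
    intro h hh
    rw [hgh h]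
    exact hP _ (key h hh)

lemma pmOne_finite : Finite ↥pmOne := by
  have hset : (pmOne : Set GL2) = {1, -1} := by
    ext x; simp [SetLike.mem_coe, pmOne_mem_iff]
  have : ((({1, -1} : Set GL2))).Finite := (Set.finite_singleton _).insert _
  rw [← hset] at this
  exact this.to_subtype

lemma finite_comap (S : Subgroup PGL2Z) (hS : Finite ↥S) :
    Finite ↥(S.comap pglMk) := by
  set H := S.comap pglMk with hH
  let f : ↥H →* ↥S := (pglMk.comp H.subtype).codRestrict S (fun x => x.2)
  have hker : Finite ↥f.ker := by
    have hinj : Function.Injective (fun x : ↥f.ker => (⟨x.val.val, by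
        have hx : pglMk x.val.val = 1 := by
          have := x.2
          rw [MonoidHom.mem_ker] at this
          exact congrArg Subtype.val this
        rcases pglMk_eq_one_iff.1 hx with h | h
        · rw [h]; exact one_mem _
        · rw [h, ← matNegI_eq]; exact Subgroup.subset_closure rfl⟩ : ↥pmOne)) := by
      intro x y hxy
      apply Subtype.ext; apply Subtype.ext
      have := congrArg Subtype.val hxy
      simpa using this
    have := pmOne_finite
    exact Finite.of_injective _ hinj
  have hquot : Finite (↥H ⧸ f.ker) :=
    Finite.of_equiv _ (QuotientGroup.quotientKerEquivRange f).symm.toEquiv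
  exact Finite.of_equiv _ (Subgroup.groupEquivQuotientProdSubgroup (s := f.ker)).symm

lemma pglD₁_eq : pglD₁ = Subgroup.map pglMk (Subgroup.closure {gS, gJ}) := rfl
lemma pglD₂_eq : pglD₂ = Subgroup.map pglMk (Subgroup.closure {gR, gJ}) := rfl

lemma conj_apply_eq (g : GL2) (u : GL2) :
    (MulAut.conj (pglMk g⁻¹)).toMonoidHom (pglMk u) = pglMk (g⁻¹ * u * g) := by
  show pglMk g⁻¹ * pglMk u * (pglMk g⁻¹)⁻¹ = pglMk (g⁻¹ * u * g)
  rw [← map_inv, inv_inv, ← map_mul, ← map_mul]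

lemma conj_into (S : Subgroup PGL2Z) (hS : Finite ↥S) :
    ∃ g : PGL2Z,
      Subgroup.map (MulAut.conj g).toMonoidHom S ≤ pglD₁ ∨
      Subgroup.map (MulAut.conj g).toMonoidHom S ≤ pglD₂ := by
  have hHfin := finite_comap S hS
  obtain ⟨gg, hcase⟩ := master_GL (S.comap pglMk) hHfin
  refine ⟨pglMk gg⁻¹, ?_⟩
  rcases hcase with hcase | hcase
  · left
    rintro x ⟨s, hs, rfl⟩
    obtain ⟨u, rfl⟩ := pglMk_surj s
    have hu : u ∈ S.comap pglMk := hs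
    rw [conj_apply_eq]
    rw [pglD₁_eq]
    exact Subgroup.mem_map_of_mem _ (D8_mem_closure (hcase u hu))
  · right
    rintro x ⟨s, hs, rfl⟩
    obtain ⟨u, rfl⟩ := pglMk_surj s
    have hu : u ∈ S.comap pglMk := hs
    rw [conj_apply_eq]
    rw [pglD₂_eq]
    exact Subgroup.mem_map_of_mem _ (D12_mem_closure (hcase u hu))

lemma mem_pglD₁_iff {x : PGL2Z} :
    x ∈ pglD₁ ↔ x = 1 ∨ x = pglMk gS ∨ x = pglMk gJ ∨ x = pglMk gK := by
  constructor
  · rintro ⟨u, hu, rfl⟩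
    have hval := mem_closure_D8 hu
    simp only [D8f, Finset.mem_insert, Finset.mem_singleton] at hval
    rcases hval with h|h|h|h|h|h|h|h
    · left; rw [show u = 1 from Units.ext (by rw [h]; decide), map_one]
    · left
      rw [show u = -1 from Units.ext (by rw [h, Units.val_neg, Units.val_one]; decide)]
      rw [← map_one pglMk]
      exact pglMk_eq_iff.2 (Or.inr rfl)
    · right; left; rw [show u = gS from Units.ext (by rw [h]; decide)]
    · right; left
      rw [show u = -gS from Units.ext (by rw [h, Units.val_neg]; decide)]
      exact pglMk_eq_iff.2 (Or.inr rfl)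
    · right; right; left; rw [show u = gJ from Units.ext (by rw [h]; decide)]
    · right; right; left
      rw [show u = -gJ from Units.ext (by rw [h, Units.val_neg]; decide)]
      exact pglMk_eq_iff.2 (Or.inr rfl)
    · right; right; right; rw [show u = gK from Units.ext (by rw [h]; decide)]
    · right; right; right
      rw [show u = -gK from Units.ext (by rw [h, Units.val_neg]; decide)]
      exact pglMk_eq_iff.2 (Or.inr rfl)
  · have hSc : gS ∈ Subgroup.closure ({gS, gJ} : Set GL2) := Subgroup.subset_closure (by simp)
    have hJc : gJ ∈ Subgroup.closure ({gS, gJ} : Set GL2) := Subgroup.subset_closure (by simp)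
    rintro (rfl | rfl | rfl | rfl)
    · exact one_mem _
    · exact Subgroup.mem_map_of_mem _ hSc
    · exact Subgroup.mem_map_of_mem _ hJc
    · rw [show gK = gS * gJ from Units.ext (by decide)]
      rw [pglD₁_eq]
      exact Subgroup.mem_map_of_mem _ (mul_mem hSc hJc)

lemma mem_pglD₂_iff {x : PGL2Z} :
    x ∈ pglD₂ ↔ x = 1 ∨ x = pglMk gR ∨ x = pglMk (gR*gR) ∨ x = pglMk gJ ∨
      x = pglMk (gR*gJ) ∨ x = pglMk (gR*gR*gJ) := by
  constructor
  · rintro ⟨u, hu, rfl⟩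
    have hval := mem_closure_D12 hu
    simp only [D12f, Finset.mem_insert, Finset.mem_singleton] at hval
    rcases hval with h|h|h|h|h|h|h|h|h|h|h|h
    · left; rw [show u = 1 from Units.ext (by rw [h]; decide), map_one]
    · left
      rw [show u = -1 from Units.ext (by rw [h, Units.val_neg, Units.val_one]; decide)]
      rw [← map_one pglMk]
      exact pglMk_eq_iff.2 (Or.inr rfl)
    · right; left; rw [show u = gR from Units.ext (by rw [h]; decide)]
    · right; left
      rw [show u = -gR from Units.ext (by rw [h, Units.val_neg]; decide)]
      exact pglMk_eq_iff.2 (Or.inr rfl)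
    · right; right; left; rw [show u = gR*gR from Units.ext (by rw [h]; decide)]
    · right; right; left
      rw [show u = -(gR*gR) from Units.ext (by rw [h, Units.val_neg]; decide)]
      exact pglMk_eq_iff.2 (Or.inr rfl)
    · right; right; right; left; rw [show u = gJ from Units.ext (by rw [h]; decide)]
    · right; right; right; left
      rw [show u = -gJ from Units.ext (by rw [h, Units.val_neg]; decide)]
      exact pglMk_eq_iff.2 (Or.inr rfl)
    · right; right; right; right; left
      rw [show u = gR*gJ from Units.ext (by rw [h]; decide)]
    · right; right; right; right; left
      rw [show u = -(gR*gJ) from Units.ext (by rw [h, Units.val_neg]; decide)]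
      exact pglMk_eq_iff.2 (Or.inr rfl)
    · right; right; right; right; right
      rw [show u = gR*gR*gJ from Units.ext (by rw [h]; decide)]
    · right; right; right; right; right
      rw [show u = -(gR*gR*gJ) from Units.ext (by rw [h, Units.val_neg]; decide)]
      exact pglMk_eq_iff.2 (Or.inr rfl)
  · have hRc : gR ∈ Subgroup.closure ({gR, gJ} : Set GL2) := Subgroup.subset_closure (by simp)
    have hJc : gJ ∈ Subgroup.closure ({gR, gJ} : Set GL2) := Subgroup.subset_closure (by simp)
    rintro (rfl | rfl | rfl | rfl | rfl | rfl)
    · exact one_mem _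
    · exact Subgroup.mem_map_of_mem _ hRc
    · exact Subgroup.mem_map_of_mem _ (mul_mem hRc hRc)
    · exact Subgroup.mem_map_of_mem _ hJc
    · exact Subgroup.mem_map_of_mem _ (mul_mem hRc hJc)
    · exact Subgroup.mem_map_of_mem _ (mul_mem (mul_mem hRc hRc) hJc)

def detP : PGL2Z →* ℤˣ :=
  QuotientGroup.lift pmOne (Matrix.GeneralLinearGroup.det) (by
    intro x hx
    rw [MonoidHom.mem_ker]
    rcases pmOne_mem_iff.1 hx with rfl | rfl
    · exact map_one _
    · apply Units.ext
      show ((-1 : GL2) : Mat2).det = 1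
      rw [Units.val_neg, Units.val_one]
      decide)

def mod2P : PGL2Z →* Matrix.GeneralLinearGroup (Fin 2) (ZMod 2) :=
  QuotientGroup.lift pmOne
    (Units.map ((Int.castRingHom (ZMod 2)).mapMatrix.toMonoidHom)) (by
    intro x hx
    rw [MonoidHom.mem_ker]
    rcases pmOne_mem_iff.1 hx with rfl | rfl
    · exact map_one _
    · apply Units.ext
      show (Int.castRingHom (ZMod 2)).mapMatrix ((-1 : GL2) : Mat2) = 1
      rw [Units.val_neg, Units.val_one]
      decide)

lemma isConj_orderOf {x y : PGL2Z} (h : IsConj x y) : orderOf x = orderOf y := by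
  rcases isConj_iff.1 h with ⟨c, rfl⟩
  have hsc : SemiconjBy c x (c * x * c⁻¹) := by
    unfold SemiconjBy; group
  exact SemiconjBy.orderOf_eq c hsc

lemma isConj_detP {x y : PGL2Z} (h : IsConj x y) : detP x = detP y := by
  rcases isConj_iff.1 h with ⟨c, rfl⟩
  rw [map_mul, map_mul, map_inv, mul_comm (detP c) (detP x), mul_assoc,
    mul_inv_cancel, mul_one]

lemma isConj_mod2P {x y : PGL2Z} (h : IsConj x y) (hx : mod2P x = 1) : mod2P y = 1 := by
  rcases isConj_iff.1 h with ⟨c, rfl⟩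
  rw [map_mul, map_mul, map_inv, hx, mul_one, mul_inv_cancel]

lemma pglMk_ne_one {u : GL2} (h1 : u.val ≠ 1) (h2 : u.val ≠ -1) : pglMk u ≠ 1 := by
  intro h
  rcases pglMk_eq_one_iff.1 h with h | h
  · exact h1 (by rw [h, Units.val_one])
  · exact h2 (by rw [h, Units.val_neg, Units.val_one])

lemma pglMk_sq_neg {u : GL2} (hu : u.val * u.val = -1) : (pglMk u)^2 = 1 := by
  rw [pow_two, ← map_mul, pglMk_eq_one_iff]
  right
  apply Units.ext
  rw [Units.val_mul, Units.val_neg, Units.val_one]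
  exact hu

lemma pglMk_sq_one {u : GL2} (hu : u.val * u.val = 1) : (pglMk u)^2 = 1 := by
  rw [pow_two, ← map_mul, pglMk_eq_one_iff]
  left
  exact Units.ext (by rw [Units.val_mul, Units.val_one]; exact hu)

lemma rep0_eq : pglMk (pglReps 0) = 1 := by
  rw [show pglReps 0 = 1 from Units.ext (by decide), map_one]

lemma ord_rep1 : orderOf (pglMk (pglReps 1)) = 2 := by
  haveI := Fact.mk Nat.prime_two
  exact orderOf_eq_prime (pglMk_sq_neg (by decide)) (pglMk_ne_one (by decide) (by decide))

lemma ord_rep2 : orderOf (pglMk (pglReps 2)) = 2 := by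
  haveI := Fact.mk Nat.prime_two
  exact orderOf_eq_prime (pglMk_sq_one (by decide)) (pglMk_ne_one (by decide) (by decide))

lemma ord_rep3 : orderOf (pglMk (pglReps 3)) = 2 := by
  haveI := Fact.mk Nat.prime_two
  exact orderOf_eq_prime (pglMk_sq_one (by decide)) (pglMk_ne_one (by decide) (by decide))

lemma ord_rep4 : orderOf (pglMk (pglReps 4)) = 3 := by
  haveI := Fact.mk Nat.prime_three
  refine orderOf_eq_prime ?_ (pglMk_ne_one (by decide) (by decide))
  have : (pglMk (pglReps 4))^3 = pglMk (pglReps 4 * pglReps 4 * pglReps 4) := by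
    rw [map_mul, map_mul, pow_succ, pow_two]
  rw [this, pglMk_eq_one_iff]
  right
  apply Units.ext
  rw [Units.val_neg, Units.val_one]
  decide

lemma ord_rep0 : orderOf (pglMk (pglReps 0)) = 1 := by
  rw [rep0_eq, orderOf_one]

lemma hOrd : ∀ i : Fin 5, orderOf (pglMk (pglReps i)) = ![1,2,2,2,3] i := by
  intro i
  fin_cases i
  · exact ord_rep0
  · exact ord_rep1
  · exact ord_rep2
  · exact ord_rep3
  · exact ord_rep4

lemma hDet : ∀ i : Fin 5, (detP (pglMk (pglReps i))).val = ![1,1,-1,-1,1] i := by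
  intro i
  have : ∀ u : GL2, detP (pglMk u) = Matrix.GeneralLinearGroup.det u := fun _ => rfl
  fin_cases i <;> rw [this] <;> decide

lemma hMod : ∀ i : Fin 5,
    (if mod2P (pglMk (pglReps i)) = 1 then (1:ℕ) else 0) = ![1,0,0,1,0] i := by
  intro i
  have hv : ∀ u : GL2, mod2P (pglMk u)
      = Units.map ((Int.castRingHom (ZMod 2)).mapMatrix.toMonoidHom) u := fun _ => rfl
  fin_cases i <;> rw [hv] <;> decide

lemma reps_unique {i j : Fin 5}
    (h : IsConj (pglMk (pglReps i)) (pglMk (pglReps j))) : i = j := by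
  have e1 : (![1,2,2,2,3] : Fin 5 → ℕ) i = ![1,2,2,2,3] j := by
    rw [← hOrd i, ← hOrd j]; exact isConj_orderOf h
  have e2 : (![1,1,-1,-1,1] : Fin 5 → ℤ) i = ![1,1,-1,-1,1] j := by
    rw [← hDet i, ← hDet j]; exact congrArg Units.val (isConj_detP h)
  have e3 : (![1,0,0,1,0] : Fin 5 → ℕ) i = ![1,0,0,1,0] j := by
    rw [← hMod i, ← hMod j]
    split_ifs with hh1 hh2 hh2
    · rfl
    · exact absurd (isConj_mod2P h hh1) hh2
    · exact absurd (isConj_mod2P h.symm hh2) hh1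
    · rfl
  clear h
  fin_cases i <;> fin_cases j <;> first | rfl | simp_all

lemma pgl_ne {u v : GL2} (h1 : u.val ≠ v.val) (h2 : u.val ≠ -(v.val)) :
    pglMk u ≠ pglMk v := by
  intro h
  rcases pglMk_eq_iff.1 h with h' | h'
  · exact h1 (by rw [h'])
  · exact h2 (by rw [h', Units.val_neg])

lemma hc1 : IsConj (pglMk (pglReps 4)) (pglMk (gR*gR)) := by
  rw [isConj_iff]
  refine ⟨pglMk gJ, ?_⟩
  rw [← map_inv, ← map_mul, ← map_mul]
  exact pglMk_eq_iff.2 (Or.inr (Units.ext (by decide)))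

lemma hc2 : IsConj (pglMk (pglReps 2)) (pglMk (gR*gJ)) := by
  rw [isConj_iff]
  refine ⟨pglMk (shearU (-1)), ?_⟩
  rw [← map_inv, ← map_mul, ← map_mul]
  exact pglMk_eq_iff.2 (Or.inl (Units.ext (by decide)))

lemma hc3 : IsConj (pglMk (pglReps 2)) (pglMk (gR*gR*gJ)) := by
  rw [isConj_iff]
  refine ⟨pglMk gR, ?_⟩
  rw [← map_inv, ← map_mul, ← map_mul]
  exact pglMk_eq_iff.2 (Or.inl (Units.ext (by decide)))

lemma exists_rep (q : PGL2Z) (hq : IsOfFinOrder q) :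
    ∃ i : Fin 5, IsConj (pglMk (pglReps i)) q := by
  have hfin : Finite ↥(Subgroup.zpowers q) := hq.finite_zpowers.to_subtype
  obtain ⟨g, hcase⟩ := conj_into _ hfin
  have hmem : (MulAut.conj g).toMonoidHom q
      ∈ Subgroup.map (MulAut.conj g).toMonoidHom (Subgroup.zpowers q) :=
    Subgroup.mem_map_of_mem _ (Subgroup.mem_zpowers q)
  have hconj : ∀ r : PGL2Z, (MulAut.conj g).toMonoidHom q = r → IsConj r q := by
    intro r hr
    apply IsConj.symm
    rw [isConj_iff]
    exact ⟨g, hr⟩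
  rcases hcase with hle | hle
  · rcases mem_pglD₁_iff.1 (hle hmem) with h | h | h | h
    · exact ⟨0, by rw [rep0_eq]; exact hconj _ h⟩
    · exact ⟨1, hconj _ h⟩
    · exact ⟨2, hconj _ h⟩
    · exact ⟨3, hconj _ h⟩
  · rcases mem_pglD₂_iff.1 (hle hmem) with h | h | h | h | h | h
    · exact ⟨0, by rw [rep0_eq]; exact hconj _ h⟩
    · exact ⟨4, hconj _ h⟩
    · exact ⟨4, hc1.trans (hconj _ h)⟩
    · exact ⟨2, hconj _ h⟩
    · exact ⟨2, hc2.trans (hconj _ h)⟩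
    · exact ⟨2, hc3.trans (hconj _ h)⟩

lemma card_pglD₁ : Nat.card ↥pglD₁ = 4 := by
  have hset : (pglD₁ : Set PGL2Z) = {1, pglMk gS, pglMk gJ, pglMk gK} := by
    ext x
    simp only [SetLike.mem_coe, mem_pglD₁_iff, Set.mem_insert_iff, Set.mem_singleton_iff]
  have hcard : Nat.card ↥pglD₁ = ({1, pglMk gS, pglMk gJ, pglMk gK} : Set PGL2Z).ncard := by
    rw [← Nat.card_coe_set_eq]
    exact Nat.card_congr (Equiv.setCongr hset)
  have hS1 : pglMk gS ≠ 1 := pglMk_ne_one (by decide) (by decide)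
  have hJ1 : pglMk gJ ≠ 1 := pglMk_ne_one (by decide) (by decide)
  have hK1 : pglMk gK ≠ 1 := pglMk_ne_one (by decide) (by decide)
  have hSJ : pglMk gS ≠ pglMk gJ := pgl_ne (by decide) (by decide)
  have hSK : pglMk gS ≠ pglMk gK := pgl_ne (by decide) (by decide)
  have hJK : pglMk gJ ≠ pglMk gK := pgl_ne (by decide) (by decide)
  rw [hcard, Set.ncard_insert_of_notMem (by
      simp only [Set.mem_insert_iff, Set.mem_singleton_iff]
      push_neg
      exact ⟨hS1.symm, hJ1.symm, hK1.symm⟩),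
    Set.ncard_insert_of_notMem (by
      simp only [Set.mem_insert_iff, Set.mem_singleton_iff]
      push_neg
      exact ⟨hSJ, hSK⟩),
    Set.ncard_pair hJK]

lemma card_pglD₂ : Nat.card ↥pglD₂ = 6 := by
  have hset : (pglD₂ : Set PGL2Z)
      = {1, pglMk gR, pglMk (gR*gR), pglMk gJ, pglMk (gR*gJ), pglMk (gR*gR*gJ)} := by
    ext x
    simp only [SetLike.mem_coe, mem_pglD₂_iff, Set.mem_insert_iff, Set.mem_singleton_iff]
  have hcard : Nat.card ↥pglD₂
      = ({1, pglMk gR, pglMk (gR*gR), pglMk gJ, pglMk (gR*gJ), pglMk (gR*gR*gJ)} :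
          Set PGL2Z).ncard := by
    rw [← Nat.card_coe_set_eq]
    exact Nat.card_congr (Equiv.setCongr hset)
  have h10 : pglMk gR ≠ 1 := pglMk_ne_one (by decide) (by decide)
  have h20 : pglMk (gR*gR) ≠ 1 := pglMk_ne_one (by decide) (by decide)
  have h30 : pglMk gJ ≠ 1 := pglMk_ne_one (by decide) (by decide)
  have h40 : pglMk (gR*gJ) ≠ 1 := pglMk_ne_one (by decide) (by decide)
  have h50 : pglMk (gR*gR*gJ) ≠ 1 := pglMk_ne_one (by decide) (by decide)
  have h12 : pglMk gR ≠ pglMk (gR*gR) := pgl_ne (by decide) (by decide)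
  have h13 : pglMk gR ≠ pglMk gJ := pgl_ne (by decide) (by decide)
  have h14 : pglMk gR ≠ pglMk (gR*gJ) := pgl_ne (by decide) (by decide)
  have h15 : pglMk gR ≠ pglMk (gR*gR*gJ) := pgl_ne (by decide) (by decide)
  have h23 : pglMk (gR*gR) ≠ pglMk gJ := pgl_ne (by decide) (by decide)
  have h24 : pglMk (gR*gR) ≠ pglMk (gR*gJ) := pgl_ne (by decide) (by decide)
  have h25 : pglMk (gR*gR) ≠ pglMk (gR*gR*gJ) := pgl_ne (by decide) (by decide)
  have h34 : pglMk gJ ≠ pglMk (gR*gJ) := pgl_ne (by decide) (by decide)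
  have h35 : pglMk gJ ≠ pglMk (gR*gR*gJ) := pgl_ne (by decide) (by decide)
  have h45 : pglMk (gR*gJ) ≠ pglMk (gR*gR*gJ) := pgl_ne (by decide) (by decide)
  rw [hcard, Set.ncard_insert_of_notMem (by
      simp only [Set.mem_insert_iff, Set.mem_singleton_iff]
      push_neg
      exact ⟨h10.symm, h20.symm, h30.symm, h40.symm, h50.symm⟩),
    Set.ncard_insert_of_notMem (by
      simp only [Set.mem_insert_iff, Set.mem_singleton_iff]
      push_neg
      exact ⟨h12, h13, h14, h15⟩),
    Set.ncard_insert_of_notMem (by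
      simp only [Set.mem_insert_iff, Set.mem_singleton_iff]
      push_neg
      exact ⟨h23, h24, h25⟩),
    Set.ncard_insert_of_notMem (by
      simp only [Set.mem_insert_iff, Set.mem_singleton_iff]
      push_neg
      exact ⟨h34, h35⟩),
    Set.ncard_pair h45]

/-- `PGL(2,ℤ)` has exactly 5 conjugacy classes of elements of finite order, represented
by the images of `I`, `[[0,−1],[1,0]]`, `[[0,1],[1,0]]`, `diag(−1,1)`, `[[0,−1],[1,1]]`,
of orders `1, 2, 2, 2, 3`; and every finite subgroup of `PGL(2,ℤ)` is conjugate to a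
subgroup of one of the two dihedral subgroups, of orders 4 and 6 respectively. -/
theorem PGL2Z_finite_order_classes_and_finite_subgroups :
    (∀ q : PGL2Z, IsOfFinOrder q → ∃! i : Fin 5, IsConj (pglMk (pglReps i)) q) ∧
    (orderOf (pglMk (pglReps 0)) = 1 ∧ orderOf (pglMk (pglReps 1)) = 2 ∧
      orderOf (pglMk (pglReps 2)) = 2 ∧ orderOf (pglMk (pglReps 3)) = 2 ∧
      orderOf (pglMk (pglReps 4)) = 3) ∧
    Nat.card ↥pglD₁ = 4 ∧ Nat.card ↥pglD₂ = 6 ∧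
    (∀ S : Subgroup PGL2Z, Finite ↥S →
      ∃ g : PGL2Z,
        Subgroup.map (MulAut.conj g).toMonoidHom S ≤ pglD₁ ∨
        Subgroup.map (MulAut.conj g).toMonoidHom S ≤ pglD₂) := by
  refine ⟨?_, ⟨ord_rep0, ord_rep1, ord_rep2, ord_rep3, ord_rep4⟩, card_pglD₁, card_pglD₂,
    fun S hS => conj_into S hS⟩
  intro q hq
  obtain ⟨i, hi⟩ := exists_rep q hq
  exact ⟨i, hi, fun j hj => reps_unique (hj.trans hi.symm)⟩
end

section
/- Let M = ⟨t₁, t₂, t₃, α⟩ where tᵢ are the standard translations of E³ and α = ½e₃ + diag(−1,−1,1). Then the normalizer of M in the group of affinities of E³ is N_A(M) = {b + B : b ∈ ℝ³, 2b₁ ∈ ℤ, 2b₂ ∈ ℤ, and B = diag(C, ±1) with C ∈ GL(2,ℤ)}. -/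
/-- Euclidean n-space, as `Fin n → ℝ`. -/
abbrev Eu (n : ℕ) : Type := Fin n → ℝ

/-- An affinity `a + A` of Euclidean n-space: `x ↦ a + A x` with `A ∈ GL(n, ℝ)`. -/
@[ext] structure Aff (n : ℕ) where
  a : Eu n
  A : Matrix.GeneralLinearGroup (Fin n) ℝ

namespace Aff

variable {n : ℕ}

/-- The matrix (linear) part of an affinity. -/
def mat (φ : Aff n) : Matrix (Fin n) (Fin n) ℝ := φ.A

instance : Mul (Aff n) := ⟨fun φ ψ => ⟨φ.a + φ.mat.mulVec ψ.a, φ.A * ψ.A⟩⟩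
instance : One (Aff n) := ⟨⟨0, 1⟩⟩
instance : Inv (Aff n) :=
  ⟨fun φ => ⟨-(Matrix.mulVec ((φ.A⁻¹ : Matrix.GeneralLinearGroup (Fin n) ℝ) : Matrix (Fin n) (Fin n) ℝ) φ.a), φ.A⁻¹⟩⟩

@[simp] lemma mul_a (φ ψ : Aff n) : (φ * ψ).a = φ.a + φ.mat.mulVec ψ.a := rfl
@[simp] lemma mul_A (φ ψ : Aff n) : (φ * ψ).A = φ.A * ψ.A := rfl
@[simp] lemma one_a : (1 : Aff n).a = 0 := rfl
@[simp] lemma one_A : (1 : Aff n).A = 1 := rfl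
@[simp] lemma inv_A (φ : Aff n) : (φ⁻¹).A = φ.A⁻¹ := rfl
@[simp] lemma mat_mul (φ ψ : Aff n) : (φ * ψ).mat = φ.mat * ψ.mat := rfl
@[simp] lemma mat_one : (1 : Aff n).mat = 1 := rfl

instance : Group (Aff n) where
  mul_assoc φ ψ χ := by
    ext1
    · simp [Matrix.mulVec_add, ← Matrix.mulVec_mulVec, add_assoc]
    · exact mul_assoc _ _ _
  one_mul φ := by
    ext1
    · simp
    · exact one_mul _
  mul_one φ := by
    ext1
    · simp
    · exact mul_one _
  inv_mul_cancel φ := by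
    ext1
    · show (φ⁻¹).a + (φ⁻¹).mat.mulVec φ.a = (0 : Eu n)
      show -(Matrix.mulVec _ φ.a) + Matrix.mulVec _ φ.a = (0 : Eu n)
      exact neg_add_cancel _
    · exact inv_mul_cancel _

instance : SMul (Aff n) (Eu n) := ⟨fun φ x => φ.a + φ.mat.mulVec x⟩

lemma smul_def (φ : Aff n) (x : Eu n) : φ • x = φ.a + φ.mat.mulVec x := rfl

instance : MulAction (Aff n) (Eu n) where
  one_smul x := by
    show (0 : Eu n) + (1 : Aff n).mat.mulVec x = x
    simp
  mul_smul φ ψ x := by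
    show (φ * ψ).a + (φ * ψ).mat.mulVec x = φ.a + φ.mat.mulVec (ψ.a + ψ.mat.mulVec x)
    simp [Matrix.mulVec_add, ← Matrix.mulVec_mulVec, add_assoc]

/-- The translation `x ↦ v + x`, as an affinity. -/
def tr (v : Eu n) : Aff n := ⟨v, 1⟩

instance : TopologicalSpace (Aff n) :=
  TopologicalSpace.induced (fun φ => (φ.a, φ.mat)) inferInstance

end Aff

/-- A diagonal matrix with `±1` diagonal entries, as an element of `GL(n,ℝ)`. -/
noncomputable def glDiag {n : ℕ} (v : Fin n → ℝ) (h : v * v = 1) :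
    Matrix.GeneralLinearGroup (Fin n) ℝ :=
  ⟨Matrix.diagonal v, Matrix.diagonal v,
    by
      rw [Matrix.diagonal_mul_diagonal]
      rw [show (fun i => v i * v i) = (1 : Fin n → ℝ) from h]
      exact Matrix.diagonal_one,
    by
      rw [Matrix.diagonal_mul_diagonal]
      rw [show (fun i => v i * v i) = (1 : Fin n → ℝ) from h]
      exact Matrix.diagonal_one⟩

/-- The block-diagonal 3×3 matrix `diag(C, δ)` with upper-left 2×2 block `C` and
lower-right entry `δ`. -/
def blockMat (C : Matrix (Fin 2) (Fin 2) ℝ) (δ : ℝ) : Matrix (Fin 3) (Fin 3) ℝ :=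
  Matrix.of fun i j =>
    if hi : (i : ℕ) < 2 then
      (if hj : (j : ℕ) < 2 then C ⟨i, hi⟩ ⟨j, hj⟩ else 0)
    else
      (if (j : ℕ) < 2 then 0 else δ)

namespace O32

/-- `α = ½e₃ + diag(−1,−1,1)`. -/
noncomputable def αg : Aff 3 :=
  ⟨Pi.single 2 (1/2 : ℝ), glDiag ![-1, -1, 1] (by funext i; fin_cases i <;> norm_num)⟩

/-- The 3-space group `M = ⟨t₁, t₂, t₃, α⟩` of the flat 3-manifold `O³₂`. -/
noncomputable def M : Subgroup (Aff 3) :=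
  Subgroup.closure
    {Aff.tr (Pi.single 0 1), Aff.tr (Pi.single 1 1), Aff.tr (Pi.single 2 1), αg}

end O32

namespace O32aux
open Matrix

noncomputable def D : Matrix (Fin 3) (Fin 3) ℝ := Matrix.diagonal ![-1,-1,1]

lemma αg_mat : O32.αg.mat = D := rfl

@[simp] lemma D00 : D 0 0 = -1 := rfl
@[simp] lemma D01 : D 0 1 = 0 := rfl
@[simp] lemma D02 : D 0 2 = 0 := rfl
@[simp] lemma D10 : D 1 0 = 0 := rfl
@[simp] lemma D11 : D 1 1 = -1 := rfl
@[simp] lemma D12 : D 1 2 = 0 := rfl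
@[simp] lemma D20 : D 2 0 = 0 := rfl
@[simp] lemma D21 : D 2 1 = 0 := rfl
@[simp] lemma D22 : D 2 2 = 1 := rfl

def II (x : ℝ) : Prop := ∃ z : ℤ, x = (z : ℝ)

lemma II.add {x y : ℝ} (hx : II x) (hy : II y) : II (x + y) := by
  obtain ⟨z, rfl⟩ := hx; obtain ⟨w, rfl⟩ := hy; exact ⟨z + w, by push_cast; ring⟩
lemma II.neg {x : ℝ} (hx : II x) : II (-x) := by
  obtain ⟨z, rfl⟩ := hx; exact ⟨-z, by push_cast; ring⟩
lemma II.mul {x y : ℝ} (hx : II x) (hy : II y) : II (x * y) := by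
  obtain ⟨z, rfl⟩ := hx; obtain ⟨w, rfl⟩ := hy; exact ⟨z * w, by push_cast; ring⟩
lemma II.sub {x y : ℝ} (hx : II x) (hy : II y) : II (x - y) := by
  simpa [sub_eq_add_neg] using hx.add hy.neg
lemma II_zero : II 0 := ⟨0, by norm_num⟩
lemma II_one : II 1 := ⟨1, by norm_num⟩
lemma II_int (z : ℤ) : II (z : ℝ) := ⟨z, rfl⟩

/-- membership predicate describing `M` explicitly -/
def MP (φ : Aff 3) : Prop :=
  (φ.mat = 1 ∧ II (φ.a 0) ∧ II (φ.a 1) ∧ II (φ.a 2)) ∨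
  (φ.mat = D ∧ II (φ.a 0) ∧ II (φ.a 1) ∧ II (φ.a 2 - 1/2))

lemma mulVec3 (B : Matrix (Fin 3) (Fin 3) ℝ) (v : Eu 3) (i : Fin 3) :
    B.mulVec v i = B i 0 * v 0 + B i 1 * v 1 + B i 2 * v 2 := by
  simp [Matrix.mulVec, dotProduct, Fin.sum_univ_three]

lemma mul3 (A B : Matrix (Fin 3) (Fin 3) ℝ) (i j : Fin 3) :
    (A * B) i j = A i 0 * B 0 j + A i 1 * B 1 j + A i 2 * B 2 j := by
  simp [Matrix.mul_apply, Fin.sum_univ_three]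

lemma vec3_ext {v w : Eu 3} (h0 : v 0 = w 0) (h1 : v 1 = w 1) (h2 : v 2 = w 2) : v = w := by
  funext i; fin_cases i <;> assumption

lemma mat3_ext {X Y : Matrix (Fin 3) (Fin 3) ℝ}
    (h00 : X 0 0 = Y 0 0) (h01 : X 0 1 = Y 0 1) (h02 : X 0 2 = Y 0 2)
    (h10 : X 1 0 = Y 1 0) (h11 : X 1 1 = Y 1 1) (h12 : X 1 2 = Y 1 2)
    (h20 : X 2 0 = Y 2 0) (h21 : X 2 1 = Y 2 1) (h22 : X 2 2 = Y 2 2) : X = Y := by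
  funext i j; fin_cases i <;> fin_cases j <;> assumption

lemma D_mul_D : D * D = 1 := by
  rw [show D = Matrix.diagonal ![-1,-1,1] from rfl, Matrix.diagonal_mul_diagonal]
  rw [show (fun i => (![-1,-1,1] : Fin 3 → ℝ) i * ![-1,-1,1] i) = (1 : Fin 3 → ℝ) by
    funext i; fin_cases i <;> norm_num]
  exact Matrix.diagonal_one

lemma D_ne_one : D ≠ 1 := by
  intro h
  have := congrFun (congrFun h 0) 0
  rw [D00, show (1 : Matrix (Fin 3) (Fin 3) ℝ) 0 0 = 1 from rfl] at this
  norm_num at this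

lemma tr_mat (v : Eu 3) : (Aff.tr v).mat = 1 := Units.val_one
lemma tr_a (v : Eu 3) : (Aff.tr v).a = v := rfl

lemma tr_mul (v w : Eu 3) : Aff.tr v * Aff.tr w = Aff.tr (v + w) := by
  ext1
  · show v + (Aff.tr v).mat.mulVec w = v + w
    rw [tr_mat, Matrix.one_mulVec]
  · show (1 : Matrix.GeneralLinearGroup (Fin 3) ℝ) * 1 = 1
    exact mul_one 1

def trHom : Multiplicative (Eu 3) →* Aff 3 where
  toFun v := Aff.tr v.toAdd
  map_one' := rfl
  map_mul' _ _ := (tr_mul _ _).symm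

lemma tr_zpow (v : Eu 3) (z : ℤ) : Aff.tr v ^ z = Aff.tr (z • v) := by
  have h1 : Aff.tr v = trHom (Multiplicative.ofAdd v) := rfl
  rw [h1, ← map_zpow]
  rfl

lemma gen_mem (j : Fin 3) : Aff.tr (Pi.single j (1:ℝ)) ∈ O32.M := by
  fin_cases j <;>
    exact Subgroup.subset_closure (by simp)

lemma αg_mem : O32.αg ∈ O32.M := Subgroup.subset_closure (by simp)

lemma tr_single_int (i : Fin 3) (z : ℤ) : Aff.tr (Pi.single i ((z:ℝ))) ∈ O32.M := by
  have h : Aff.tr (Pi.single i ((z:ℝ))) = Aff.tr (Pi.single i (1:ℝ)) ^ z := by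
    rw [tr_zpow]
    congr 1
    funext j
    simp [Pi.single_apply]
  rw [h]
  exact zpow_mem (gen_mem i) z

lemma tr_int_mem {v : Eu 3} (h0 : II (v 0)) (h1 : II (v 1)) (h2 : II (v 2)) :
    Aff.tr v ∈ O32.M := by
  obtain ⟨z0, hz0⟩ := h0; obtain ⟨z1, hz1⟩ := h1; obtain ⟨z2, hz2⟩ := h2
  have hv : v = Pi.single 0 ((z0:ℝ)) + Pi.single 1 ((z1:ℝ)) + Pi.single 2 ((z2:ℝ)) := by
    funext j
    fin_cases j <;> simp [Pi.single_apply, hz0, hz1, hz2]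
  rw [hv, ← tr_mul, ← tr_mul]
  exact mul_mem (mul_mem (tr_single_int 0 z0) (tr_single_int 1 z1)) (tr_single_int 2 z2)

/-- the explicit set is a subgroup -/
noncomputable def MS : Subgroup (Aff 3) where
  carrier := {φ | MP φ}
  one_mem' := Or.inl ⟨rfl, II_zero, II_zero, II_zero⟩
  mul_mem' := by
    rintro φ ψ hφ hψ
    have ha : ∀ i, (φ * ψ).a i = φ.a i + (φ.mat.mulVec ψ.a) i := fun i => rfl
    rcases hφ with ⟨hm, h0, h1, h2⟩ | ⟨hm, h0, h1, h2⟩ <;>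
      rcases hψ with ⟨hm', h0', h1', h2'⟩ | ⟨hm', h0', h1', h2'⟩
    · refine Or.inl ⟨by show φ.mat * ψ.mat = 1; rw [hm, hm', one_mul], ?_, ?_, ?_⟩ <;>
      · rw [ha, hm, Matrix.one_mulVec]
        first
        | exact h0.add h0'
        | exact h1.add h1'
        | exact h2.add h2'
    · refine Or.inr ⟨by show φ.mat * ψ.mat = D; rw [hm, hm', one_mul], ?_, ?_, ?_⟩
      · rw [ha, hm, Matrix.one_mulVec]; exact h0.add h0'
      · rw [ha, hm, Matrix.one_mulVec]; exact h1.add h1'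
      · have : φ.a 2 + ψ.a 2 - 1/2 = φ.a 2 + (ψ.a 2 - 1/2) := by ring
        rw [ha, hm, Matrix.one_mulVec, this]; exact h2.add h2'
    · refine Or.inr ⟨by show φ.mat * ψ.mat = D; rw [hm, hm', mul_one], ?_, ?_, ?_⟩
      · rw [ha, hm, mulVec3]
        simp only [D00, D01, D02, D10, D11, D12, D20, D21, D22]
        have e : φ.a 0 + (-1 * ψ.a 0 + 0 * ψ.a 1 + 0 * ψ.a 2) = φ.a 0 + -(ψ.a 0) := by ring
        rw [e]; exact h0.add h0'.neg
      · rw [ha, hm, mulVec3]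
        simp only [D00, D01, D02, D10, D11, D12, D20, D21, D22]
        have e : φ.a 1 + (0 * ψ.a 0 + -1 * ψ.a 1 + 0 * ψ.a 2) = φ.a 1 + -(ψ.a 1) := by ring
        rw [e]; exact h1.add h1'.neg
      · rw [ha, hm, mulVec3]
        simp only [D00, D01, D02, D10, D11, D12, D20, D21, D22]
        have e : φ.a 2 + (0 * ψ.a 0 + 0 * ψ.a 1 + 1 * ψ.a 2) - 1/2
            = φ.a 2 - 1/2 + ψ.a 2 := by ring
        rw [e]; exact h2.add h2'
    · refine Or.inl ⟨by show φ.mat * ψ.mat = 1; rw [hm, hm']; exact D_mul_D, ?_, ?_, ?_⟩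
      · rw [ha, hm, mulVec3]
        simp only [D00, D01, D02, D10, D11, D12, D20, D21, D22]
        have e : φ.a 0 + (-1 * ψ.a 0 + 0 * ψ.a 1 + 0 * ψ.a 2) = φ.a 0 + -(ψ.a 0) := by ring
        rw [e]; exact h0.add h0'.neg
      · rw [ha, hm, mulVec3]
        simp only [D00, D01, D02, D10, D11, D12, D20, D21, D22]
        have e : φ.a 1 + (0 * ψ.a 0 + -1 * ψ.a 1 + 0 * ψ.a 2) = φ.a 1 + -(ψ.a 1) := by ring
        rw [e]; exact h1.add h1'.neg
      · rw [ha, hm, mulVec3]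
        simp only [D00, D01, D02, D10, D11, D12, D20, D21, D22]
        have e : φ.a 2 + (0 * ψ.a 0 + 0 * ψ.a 1 + 1 * ψ.a 2)
            = (φ.a 2 - 1/2) + (ψ.a 2 - 1/2) + 1 := by ring
        rw [e]; exact (h2.add h2').add II_one
  inv_mem' := by
    rintro φ (⟨hm, h0, h1, h2⟩ | ⟨hm, h0, h1, h2⟩)
    · have hA : φ.A = 1 := Units.ext (by rw [Units.val_one]; exact hm)
      have hAi : φ.A⁻¹ = 1 := by rw [hA, inv_one]
      have hmInv : (φ⁻¹).mat = 1 := by show ((φ.A⁻¹ : Matrix.GeneralLinearGroup (Fin 3) ℝ) : Matrix (Fin 3) (Fin 3) ℝ) = 1; rw [hAi, Units.val_one]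
      have haInv : ∀ i, (φ⁻¹).a i = -(φ.a i) := by
        intro i
        show (-(Matrix.mulVec ((φ.A⁻¹ : Matrix.GeneralLinearGroup (Fin 3) ℝ) : Matrix (Fin 3) (Fin 3) ℝ) φ.a)) i = -(φ.a i)
        rw [hAi, Units.val_one, Matrix.one_mulVec]
        rfl
      exact Or.inl ⟨hmInv, haInv 0 ▸ h0.neg, haInv 1 ▸ h1.neg, haInv 2 ▸ h2.neg⟩
    · have hAA : φ.A * φ.A = 1 := Units.ext (by
        rw [Units.val_mul, Units.val_one]
        show φ.mat * φ.mat = 1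
        rw [hm]; exact D_mul_D)
      have hAi : φ.A⁻¹ = φ.A := inv_eq_of_mul_eq_one_right hAA
      have hmInv : (φ⁻¹).mat = D := by
        show ((φ.A⁻¹ : Matrix.GeneralLinearGroup (Fin 3) ℝ) : Matrix (Fin 3) (Fin 3) ℝ) = D
        rw [hAi]; exact hm
      have haInv : ∀ i, (φ⁻¹).a i = -((D.mulVec φ.a) i) := by
        intro i
        show (-(Matrix.mulVec ((φ.A⁻¹ : Matrix.GeneralLinearGroup (Fin 3) ℝ) : Matrix (Fin 3) (Fin 3) ℝ) φ.a)) i = _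
        rw [hAi, show ((φ.A : Matrix.GeneralLinearGroup (Fin 3) ℝ) : Matrix (Fin 3) (Fin 3) ℝ) = D from hm]
        rfl
      refine Or.inr ⟨hmInv, ?_, ?_, ?_⟩
      · rw [haInv 0, mulVec3]
        simp only [D00, D01, D02]
        have e : -(-1 * φ.a 0 + 0 * φ.a 1 + 0 * φ.a 2) = φ.a 0 := by ring
        rw [e]; exact h0
      · rw [haInv 1, mulVec3]
        simp only [D10, D11, D12]
        have e : -(0 * φ.a 0 + -1 * φ.a 1 + 0 * φ.a 2) = φ.a 1 := by ring
        rw [e]; exact h1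
      · rw [haInv 2, mulVec3]
        simp only [D20, D21, D22]
        obtain ⟨z, hz⟩ := h2
        exact ⟨-z - 1, by push_cast; linarith⟩

lemma mem_M_iff (φ : Aff 3) : φ ∈ O32.M ↔ MP φ := by
  constructor
  · intro hφ
    refine (Subgroup.closure_le MS).mpr ?_ hφ
    rintro x hx
    simp only [Set.mem_insert_iff, Set.mem_singleton_iff] at hx
    rcases hx with rfl | rfl | rfl | rfl
    · exact Or.inl ⟨tr_mat _, ⟨1, by simp [tr_a]⟩, ⟨0, by simp [tr_a, Pi.single_apply]⟩,
        ⟨0, by simp [tr_a, Pi.single_apply]⟩⟩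
    · exact Or.inl ⟨tr_mat _, ⟨0, by simp [tr_a, Pi.single_apply]⟩, ⟨1, by simp [tr_a]⟩,
        ⟨0, by simp [tr_a, Pi.single_apply]⟩⟩
    · exact Or.inl ⟨tr_mat _, ⟨0, by simp [tr_a, Pi.single_apply]⟩,
        ⟨0, by simp [tr_a, Pi.single_apply]⟩, ⟨1, by simp [tr_a]⟩⟩
    · exact Or.inr ⟨rfl, ⟨0, by simp [O32.αg, Pi.single_apply]⟩,
        ⟨0, by simp [O32.αg, Pi.single_apply]⟩, ⟨0, by simp [O32.αg, Pi.single_apply]⟩⟩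
  · rintro (⟨hm, h0, h1, h2⟩ | ⟨hm, h0, h1, h2⟩)
    · have hA : φ.A = 1 := Units.ext (by rw [Units.val_one]; exact hm)
      have hφ : φ = Aff.tr φ.a := by
        obtain ⟨av, AA⟩ := φ
        simp only at hA
        rw [hA]; rfl
      rw [hφ]
      exact tr_int_mem h0 h1 h2
    · have hA : φ.A = O32.αg.A := Units.ext hm
      have hφ : φ = Aff.tr (φ.a - Pi.single 2 (1/2 : ℝ)) * O32.αg := by
        ext1
        · show φ.a = (φ.a - Pi.single 2 (1/2:ℝ)) + (Aff.tr _).mat.mulVec (Pi.single 2 (1/2:ℝ))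
          rw [tr_mat, Matrix.one_mulVec, sub_add_cancel]
        · show φ.A = 1 * O32.αg.A
          rw [one_mul]; exact hA
      rw [hφ]
      refine mul_mem (tr_int_mem ?_ ?_ ?_) αg_mem
      · simpa [Pi.single_apply] using h0
      · simpa [Pi.single_apply] using h1
      · simpa [Pi.single_apply] using h2

-- conjugation machinery
lemma inv_mat (φ : Aff 3) :
    (φ⁻¹).mat = ((φ.A⁻¹ : Matrix.GeneralLinearGroup (Fin 3) ℝ) : Matrix (Fin 3) (Fin 3) ℝ) := rfl

lemma matmul_inv (φ : Aff 3) :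
    φ.mat * ((φ.A⁻¹ : Matrix.GeneralLinearGroup (Fin 3) ℝ) : Matrix (Fin 3) (Fin 3) ℝ) = 1 := by
  rw [show φ.mat * ((φ.A⁻¹ : Matrix.GeneralLinearGroup (Fin 3) ℝ) : Matrix (Fin 3) (Fin 3) ℝ)
      = ((φ.A * φ.A⁻¹ : Matrix.GeneralLinearGroup (Fin 3) ℝ) : Matrix (Fin 3) (Fin 3) ℝ)
      from (Units.val_mul _ _).symm, mul_inv_cancel, Units.val_one]

lemma inv_matmul (φ : Aff 3) :
    ((φ.A⁻¹ : Matrix.GeneralLinearGroup (Fin 3) ℝ) : Matrix (Fin 3) (Fin 3) ℝ) * φ.mat = 1 := by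
  rw [show ((φ.A⁻¹ : Matrix.GeneralLinearGroup (Fin 3) ℝ) : Matrix (Fin 3) (Fin 3) ℝ) * φ.mat
      = ((φ.A⁻¹ * φ.A : Matrix.GeneralLinearGroup (Fin 3) ℝ) : Matrix (Fin 3) (Fin 3) ℝ)
      from (Units.val_mul _ _).symm, inv_mul_cancel, Units.val_one]

lemma conj_mat (φ ψ : Aff 3) :
    (φ * ψ * φ⁻¹).mat
      = φ.mat * ψ.mat * ((φ.A⁻¹ : Matrix.GeneralLinearGroup (Fin 3) ℝ) : Matrix (Fin 3) (Fin 3) ℝ) := rfl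

lemma conj_a (φ ψ : Aff 3) :
    (φ * ψ * φ⁻¹).a
      = φ.a + φ.mat.mulVec ψ.a
        - (φ.mat * ψ.mat * ((φ.A⁻¹ : Matrix.GeneralLinearGroup (Fin 3) ℝ) : Matrix (Fin 3) (Fin 3) ℝ)).mulVec φ.a := by
  show (φ * ψ).a + (φ * ψ).mat.mulVec (φ⁻¹).a = _
  rw [Aff.mul_a]
  rw [show (φ⁻¹).a = -(Matrix.mulVec ((φ.A⁻¹ : Matrix.GeneralLinearGroup (Fin 3) ℝ) : Matrix (Fin 3) (Fin 3) ℝ) φ.a) from rfl]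
  rw [Matrix.mulVec_neg, show (φ * ψ).mat = φ.mat * ψ.mat from rfl, Matrix.mulVec_mulVec]
  rw [sub_eq_add_neg]

lemma conj_tr (φ : Aff 3) (v : Eu 3) :
    φ * Aff.tr v * φ⁻¹ = Aff.tr (φ.mat.mulVec v) := by
  ext1
  · rw [conj_a, tr_a, show (Aff.tr v).mat = 1 from tr_mat v, mul_one, matmul_inv,
      Matrix.one_mulVec, tr_a, add_sub_cancel_left]
  · show φ.A * 1 * φ.A⁻¹ = 1
    rw [mul_one, mul_inv_cancel]

lemma tr_mem_components {v : Eu 3} (hv : Aff.tr v ∈ O32.M) :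
    II (v 0) ∧ II (v 1) ∧ II (v 2) := by
  rcases (mem_M_iff _).mp hv with ⟨_, h⟩ | ⟨hm, _⟩
  · exact h
  · have : (1 : Matrix (Fin 3) (Fin 3) ℝ) = D := by rw [← tr_mat v]; exact hm
    exact absurd this.symm D_ne_one

lemma zeros_of_commD {X : Matrix (Fin 3) (Fin 3) ℝ} (h : X * D = D * X) :
    X 0 2 = 0 ∧ X 1 2 = 0 ∧ X 2 0 = 0 ∧ X 2 1 = 0 := by
  have h02 := congrFun (congrFun h 0) 2
  have h12 := congrFun (congrFun h 1) 2
  have h20 := congrFun (congrFun h 2) 0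
  have h21 := congrFun (congrFun h 2) 1
  rw [mul3, mul3] at h02 h12 h20 h21
  simp only [D00, D01, D02, D10, D11, D12, D20, D21, D22] at h02 h12 h20 h21
  refine ⟨by linarith, by linarith, by linarith, by linarith⟩

/-- exactly the right-hand side of the theorem. -/
def RHSP (φ : Aff 3) : Prop :=
  II (2 * φ.a 0) ∧ II (2 * φ.a 1) ∧
    ∃ C : Matrix (Fin 2) (Fin 2) ℤ, IsUnit C.det ∧
      ∃ δ : ℝ, (δ = 1 ∨ δ = -1) ∧
        Aff.mat φ = blockMat (C.map (fun z : ℤ => (z : ℝ))) δ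

lemma normalizer_forward (φ : Aff 3) (hn : φ ∈ Subgroup.normalizer (O32.M : Set (Aff 3))) : RHSP φ := by
  have hc : ∀ g, g ∈ O32.M ↔ φ * g * φ⁻¹ ∈ O32.M := Subgroup.mem_normalizer_iff.mp hn
  have hn' : φ⁻¹ ∈ Subgroup.normalizer (O32.M : Set (Aff 3)) := (Subgroup.normalizer (O32.M : Set (Aff 3))).inv_mem hn
  have hc' : ∀ g, g ∈ O32.M ↔ φ⁻¹ * g * (φ⁻¹)⁻¹ ∈ O32.M := Subgroup.mem_normalizer_iff.mp hn'
  -- all entries of B are integers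
  have hB : ∀ i j : Fin 3, II (φ.mat i j) := by
    intro i j
    have hmem : Aff.tr (φ.mat.mulVec (Pi.single j (1:ℝ))) ∈ O32.M := by
      rw [← conj_tr]; exact (hc _).mp (gen_mem j)
    obtain ⟨k0, k1, k2⟩ := tr_mem_components hmem
    have e : ∀ i : Fin 3, (φ.mat.mulVec (Pi.single j (1:ℝ))) i = φ.mat i j := by
      intro i
      rw [mulVec3]
      fin_cases j <;> simp [Pi.single_apply]
    fin_cases i
    · exact e 0 ▸ k0
    · exact e 1 ▸ k1
    · exact e 2 ▸ k2
  have hB' : ∀ i j : Fin 3,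
      II (((φ.A⁻¹ : Matrix.GeneralLinearGroup (Fin 3) ℝ) : Matrix (Fin 3) (Fin 3) ℝ) i j) := by
    intro i j
    show II ((φ⁻¹).mat i j)
    have hmem : Aff.tr ((φ⁻¹).mat.mulVec (Pi.single j (1:ℝ))) ∈ O32.M := by
      rw [← conj_tr]; exact (hc' _).mp (gen_mem j)
    obtain ⟨k0, k1, k2⟩ := tr_mem_components hmem
    have e : ∀ i : Fin 3, ((φ⁻¹).mat.mulVec (Pi.single j (1:ℝ))) i = (φ⁻¹).mat i j := by
      intro i
      rw [mulVec3]
      fin_cases j <;> simp [Pi.single_apply]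
    fin_cases i
    · exact e 0 ▸ k0
    · exact e 1 ▸ k1
    · exact e 2 ▸ k2
  -- conjugate of α
  have hα : φ * O32.αg * φ⁻¹ ∈ O32.M := (hc _).mp αg_mem
  rcases (mem_M_iff _).mp hα with ⟨hm1, _⟩ | ⟨hmD, ha0, ha1, _⟩
  · exfalso
    have hu : φ.A * O32.αg.A * φ.A⁻¹ = 1 := Units.ext (by rw [Units.val_one]; exact hm1)
    have hα1 : O32.αg.A = 1 := by
      have := congrArg (fun x => φ.A⁻¹ * x * φ.A) hu
      simpa [mul_assoc] using this
    have : D = (1 : Matrix (Fin 3) (Fin 3) ℝ) := by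
      rw [show D = ((O32.αg.A : Matrix.GeneralLinearGroup (Fin 3) ℝ) : Matrix (Fin 3) (Fin 3) ℝ) from rfl,
        hα1, Units.val_one]
    exact D_ne_one this
  · set B' := ((φ.A⁻¹ : Matrix.GeneralLinearGroup (Fin 3) ℝ) : Matrix (Fin 3) (Fin 3) ℝ) with hB'def
    have hBD : φ.mat * D * B' = D := hmD
    have comm : φ.mat * D = D * φ.mat := by
      calc φ.mat * D = φ.mat * D * (B' * φ.mat) := by rw [inv_matmul, mul_one]
        _ = (φ.mat * D * B') * φ.mat := by simp only [mul_assoc]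
        _ = D * φ.mat := by rw [hBD]
    have comm' : B' * D = D * B' := by
      have h1 := congrArg (fun X => B' * X * B') comm
      change B' * (φ.mat * D) * B' = B' * (D * φ.mat) * B' at h1
      rw [← mul_assoc, ← mul_assoc, inv_matmul, one_mul, mul_assoc (B' * D), matmul_inv,
        mul_one] at h1
      exact h1.symm
    obtain ⟨z02, z12, z20, z21⟩ := zeros_of_commD comm
    obtain ⟨z02', z12', z20', z21'⟩ := zeros_of_commD comm'
    -- δ = B 2 2 is ±1
    obtain ⟨d, hd⟩ := hB 2 2
    obtain ⟨d', hd'⟩ := hB' 2 2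
    have h22 : φ.mat 2 2 * B' 2 2 = 1 := by
      have := congrFun (congrFun (matmul_inv φ) 2) 2
      rw [mul3, z20, z21] at this
      rw [show (1 : Matrix (Fin 3) (Fin 3) ℝ) 2 2 = 1 from rfl] at this
      linarith [this]
    have hdd' : d * d' = 1 := by
      have : ((d * d' : ℤ) : ℝ) = ((1 : ℤ) : ℝ) := by push_cast; rw [← hd, ← hd']; linarith
      exact_mod_cast this
    have hδ : φ.mat 2 2 = 1 ∨ φ.mat 2 2 = -1 := by
      rcases Int.isUnit_iff.mp (IsUnit.of_mul_eq_one _ hdd') with h | h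
      · left; rw [hd, h]; norm_num
      · right; rw [hd, h]; norm_num
    -- the 2x2 integer blocks
    obtain ⟨c00, h00⟩ := hB 0 0
    obtain ⟨c01, h01⟩ := hB 0 1
    obtain ⟨c10, h10⟩ := hB 1 0
    obtain ⟨c11, h11⟩ := hB 1 1
    obtain ⟨c00', h00'⟩ := hB' 0 0
    obtain ⟨c01', h01'⟩ := hB' 0 1
    obtain ⟨c10', h10'⟩ := hB' 1 0
    obtain ⟨c11', h11'⟩ := hB' 1 1
    set C : Matrix (Fin 2) (Fin 2) ℤ := !![c00, c01; c10, c11] with hC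
    set C' : Matrix (Fin 2) (Fin 2) ℤ := !![c00', c01'; c10', c11'] with hC'
    have hCC' : C * C' = 1 := by
      have key : ∀ (i j : Fin 3), (i:ℕ) < 2 → (j:ℕ) < 2 →
          φ.mat i 0 * B' 0 j + φ.mat i 1 * B' 1 j + φ.mat i 2 * B' 2 j
            = (1 : Matrix (Fin 3) (Fin 3) ℝ) i j := by
        intro i j _ _
        rw [← mul3]
        rw [matmul_inv]
      have k00 := key 0 0 (by norm_num) (by norm_num)
      have k01 := key 0 1 (by norm_num) (by norm_num)
      have k10 := key 1 0 (by norm_num) (by norm_num)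
      have k11 := key 1 1 (by norm_num) (by norm_num)
      rw [z02] at k00 k01
      rw [z12] at k10 k11
      rw [h00, h01, h00', h10'] at k00
      rw [h00, h01, h01', h11'] at k01
      rw [h10, h11, h00', h10'] at k10
      rw [h10, h11, h01', h11'] at k11
      rw [show (1 : Matrix (Fin 3) (Fin 3) ℝ) 0 0 = 1 from rfl] at k00
      rw [show (1 : Matrix (Fin 3) (Fin 3) ℝ) 0 1 = 0 from rfl] at k01
      rw [show (1 : Matrix (Fin 3) (Fin 3) ℝ) 1 0 = 0 from rfl] at k10
      rw [show (1 : Matrix (Fin 3) (Fin 3) ℝ) 1 1 = 1 from rfl] at k11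
      have i00 : c00 * c00' + c01 * c10' = 1 := by
        have : ((c00 * c00' + c01 * c10' : ℤ) : ℝ) = ((1 : ℤ) : ℝ) := by push_cast; linarith
        exact_mod_cast this
      have i01 : c00 * c01' + c01 * c11' = 0 := by
        have : ((c00 * c01' + c01 * c11' : ℤ) : ℝ) = ((0 : ℤ) : ℝ) := by push_cast; linarith
        exact_mod_cast this
      have i10 : c10 * c00' + c11 * c10' = 0 := by
        have : ((c10 * c00' + c11 * c10' : ℤ) : ℝ) = ((0 : ℤ) : ℝ) := by push_cast; linarith
        exact_mod_cast this
      have i11 : c10 * c01' + c11 * c11' = 1 := by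
        have : ((c10 * c01' + c11 * c11' : ℤ) : ℝ) = ((1 : ℤ) : ℝ) := by push_cast; linarith
        exact_mod_cast this
      rw [hC, hC', Matrix.mul_fin_two, i00, i01, i10, i11, Matrix.one_fin_two]
    have hdet : IsUnit C.det :=
      IsUnit.of_mul_eq_one C'.det (by rw [← Matrix.det_mul, hCC', Matrix.det_one])
    -- translation part
    have hDr : φ.mat * O32.αg.mat
        * ((φ.A⁻¹ : Matrix.GeneralLinearGroup (Fin 3) ℝ) : Matrix (Fin 3) (Fin 3) ℝ) = D := hBD
    have hv : (φ * O32.αg * φ⁻¹).a = φ.a + φ.mat.mulVec O32.αg.a - D.mulVec φ.a := by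
      rw [conj_a, hDr]
    rw [hv] at ha0 ha1
    simp only [Pi.add_apply, Pi.sub_apply] at ha0 ha1
    rw [mulVec3, mulVec3, z02] at ha0
    rw [mulVec3, mulVec3, z12] at ha1
    simp only [show O32.αg.a 0 = 0 from rfl, show O32.αg.a 1 = 0 from rfl,
      show O32.αg.a 2 = 1/2 from rfl, D00, D01, D02, D10, D11, D12] at ha0 ha1
    refine ⟨?_, ?_, C, hdet, φ.mat 2 2, hδ, ?_⟩
    · obtain ⟨z, hz⟩ := ha0
      exact ⟨z, by rw [← hz]; ring⟩
    · obtain ⟨z, hz⟩ := ha1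
      exact ⟨z, by rw [← hz]; ring⟩
    · exact mat3_ext h00 h01 z02 h10 h11 z12 z20 z21 rfl

-- backward direction machinery
lemma blockMat_mul (P Q : Matrix (Fin 2) (Fin 2) ℝ) (δ ε : ℝ) :
    blockMat P δ * blockMat Q ε = blockMat (P * Q) (δ * ε) := by
  have h2 : ∀ i j : Fin 2, (P * Q) i j = P i 0 * Q 0 j + P i 1 * Q 1 j := by
    intro i j; simp [Matrix.mul_apply, Fin.sum_univ_two]
  refine mat3_ext ?_ ?_ ?_ ?_ ?_ ?_ ?_ ?_ ?_
  · rw [mul3]; show P 0 0 * Q 0 0 + P 0 1 * Q 1 0 + 0 * 0 = (P * Q) 0 0; rw [h2]; ring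
  · rw [mul3]; show P 0 0 * Q 0 1 + P 0 1 * Q 1 1 + 0 * 0 = (P * Q) 0 1; rw [h2]; ring
  · rw [mul3]; show P 0 0 * 0 + P 0 1 * 0 + 0 * ε = (0 : ℝ); ring
  · rw [mul3]; show P 1 0 * Q 0 0 + P 1 1 * Q 1 0 + 0 * 0 = (P * Q) 1 0; rw [h2]; ring
  · rw [mul3]; show P 1 0 * Q 0 1 + P 1 1 * Q 1 1 + 0 * 0 = (P * Q) 1 1; rw [h2]; ring
  · rw [mul3]; show P 1 0 * 0 + P 1 1 * 0 + 0 * ε = (0 : ℝ); ring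
  · rw [mul3]; show 0 * Q 0 0 + 0 * Q 1 0 + δ * 0 = (0 : ℝ); ring
  · rw [mul3]; show 0 * Q 0 1 + 0 * Q 1 1 + δ * 0 = (0 : ℝ); ring
  · rw [mul3]; show 0 * 0 + 0 * 0 + δ * ε = δ * ε; ring

lemma blockMat_one : blockMat 1 1 = (1 : Matrix (Fin 3) (Fin 3) ℝ) := by
  refine mat3_ext ?_ ?_ ?_ ?_ ?_ ?_ ?_ ?_ ?_ <;> rfl


lemma left_inv_unique (φ : Aff 3) (X : Matrix (Fin 3) (Fin 3) ℝ) (hX : X * φ.mat = 1) :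
    ((φ.A⁻¹ : Matrix.GeneralLinearGroup (Fin 3) ℝ) : Matrix (Fin 3) (Fin 3) ℝ) = X := by
  calc ((φ.A⁻¹ : Matrix.GeneralLinearGroup (Fin 3) ℝ) : Matrix (Fin 3) (Fin 3) ℝ)
      = 1 * _ := (one_mul _).symm
    _ = (X * φ.mat) * _ := by rw [hX]
    _ = X * (φ.mat * ((φ.A⁻¹ : Matrix.GeneralLinearGroup (Fin 3) ℝ) : Matrix (Fin 3) (Fin 3) ℝ)) := by
        rw [mul_assoc]
    _ = X := by rw [matmul_inv, mul_one]

lemma map_mul_int (X Y : Matrix (Fin 2) (Fin 2) ℤ) :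
    (X * Y).map (fun z : ℤ => (z : ℝ)) = X.map (fun z : ℤ => (z : ℝ)) * Y.map (fun z : ℤ => (z : ℝ)) :=
  Matrix.map_mul (f := Int.castRingHom ℝ)

lemma map_one_int : ((1 : Matrix (Fin 2) (Fin 2) ℤ).map (fun z : ℤ => (z : ℝ))) = 1 :=
  Matrix.map_one _ (by simp) (by simp)

lemma Binv_eq (φ : Aff 3) (C : Matrix (Fin 2) (Fin 2) ℤ) (hu : IsUnit C.det) (δ : ℝ)
    (hδ : δ = 1 ∨ δ = -1)
    (hm : φ.mat = blockMat (C.map (fun z : ℤ => (z : ℝ))) δ) :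
    ((φ.A⁻¹ : Matrix.GeneralLinearGroup (Fin 3) ℝ) : Matrix (Fin 3) (Fin 3) ℝ)
      = blockMat (C⁻¹.map (fun z : ℤ => (z : ℝ))) δ := by
  have hδδ : δ * δ = 1 := by rcases hδ with rfl | rfl <;> norm_num
  refine left_inv_unique φ _ ?_
  rw [hm, blockMat_mul, ← map_mul_int, Matrix.nonsing_inv_mul C hu, map_one_int, hδδ,
    blockMat_one]

lemma RHSP_inv (φ : Aff 3) (h : RHSP φ) : RHSP φ⁻¹ := by
  obtain ⟨h0, h1, C, hu, δ, hδ, hm⟩ := h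
  have hBinv := Binv_eq φ C hu δ hδ hm
  have ha : ∀ i, (φ⁻¹).a i
      = -((blockMat (C⁻¹.map (fun z : ℤ => (z : ℝ))) δ).mulVec φ.a i) := by
    intro i
    show (-(Matrix.mulVec ((φ.A⁻¹ : Matrix.GeneralLinearGroup (Fin 3) ℝ) : Matrix (Fin 3) (Fin 3) ℝ) φ.a)) i = _
    rw [hBinv]; rfl
  obtain ⟨z0, hz0⟩ := h0
  obtain ⟨z1, hz1⟩ := h1
  refine ⟨⟨-(C⁻¹ 0 0 * z0 + C⁻¹ 0 1 * z1), ?_⟩, ⟨-(C⁻¹ 1 0 * z0 + C⁻¹ 1 1 * z1), ?_⟩,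
    C⁻¹, ?_, δ, hδ, ?_⟩
  · rw [ha 0, mulVec3]
    show 2 * -(((C⁻¹ 0 0 : ℤ) : ℝ) * φ.a 0 + ((C⁻¹ 0 1 : ℤ) : ℝ) * φ.a 1 + 0 * φ.a 2) = _
    push_cast
    linear_combination (-((C⁻¹ 0 0 : ℤ) : ℝ)) * hz0 + (-((C⁻¹ 0 1 : ℤ) : ℝ)) * hz1
  · rw [ha 1, mulVec3]
    show 2 * -(((C⁻¹ 1 0 : ℤ) : ℝ) * φ.a 0 + ((C⁻¹ 1 1 : ℤ) : ℝ) * φ.a 1 + 0 * φ.a 2) = _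
    push_cast
    linear_combination (-((C⁻¹ 1 0 : ℤ) : ℝ)) * hz0 + (-((C⁻¹ 1 1 : ℤ) : ℝ)) * hz1
  · exact IsUnit.of_mul_eq_one C.det
      (by rw [← Matrix.det_mul, Matrix.nonsing_inv_mul C hu, Matrix.det_one])
  · exact hBinv

lemma D_block : D = blockMat (-1) 1 := by
  refine mat3_ext ?_ ?_ ?_ ?_ ?_ ?_ ?_ ?_ ?_ <;>
    simp [blockMat]

lemma conj_MP (φ g : Aff 3) (h : RHSP φ) (hg : MP g) : MP (φ * g * φ⁻¹) := by
  obtain ⟨h0, h1, C, hu, δ, hδ, hm⟩ := h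
  have hBinv := Binv_eq φ C hu δ hδ hm
  have hδδ : δ * δ = 1 := by rcases hδ with rfl | rfl <;> norm_num
  have hCr : C.map (fun z : ℤ => (z : ℝ)) * C⁻¹.map (fun z : ℤ => (z : ℝ)) = 1 := by
    rw [← map_mul_int, Matrix.mul_nonsing_inv C hu, map_one_int]
  rcases hg with ⟨hgm, k0, k1, k2⟩ | ⟨hgm, k0, k1, k2⟩
  · -- g is a translation
    have hcm : (φ * g * φ⁻¹).mat = 1 := by
      rw [conj_mat, hgm, mul_one, matmul_inv]
    have hca : (φ * g * φ⁻¹).a = φ.mat.mulVec g.a := by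
      rw [conj_a, hgm, mul_one, matmul_inv, Matrix.one_mulVec]
      exact add_sub_cancel_left _ _
    obtain ⟨z0, hz0⟩ := k0
    obtain ⟨z1, hz1⟩ := k1
    obtain ⟨z2, hz2⟩ := k2
    refine Or.inl ⟨hcm, ?_, ?_, ?_⟩
    · rw [hca, hm, mulVec3]
      show II (((C 0 0 : ℤ) : ℝ) * g.a 0 + ((C 0 1 : ℤ) : ℝ) * g.a 1 + 0 * g.a 2)
      exact ⟨C 0 0 * z0 + C 0 1 * z1, by push_cast; rw [hz0, hz1]; ring⟩
    · rw [hca, hm, mulVec3]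
      show II (((C 1 0 : ℤ) : ℝ) * g.a 0 + ((C 1 1 : ℤ) : ℝ) * g.a 1 + 0 * g.a 2)
      exact ⟨C 1 0 * z0 + C 1 1 * z1, by push_cast; rw [hz0, hz1]; ring⟩
    · rw [hca, hm, mulVec3]
      show II (0 * g.a 0 + 0 * g.a 1 + δ * g.a 2)
      rcases hδ with rfl | rfl
      · exact ⟨z2, by rw [hz2]; ring⟩
      · exact ⟨-z2, by push_cast; rw [hz2]; ring⟩
  · -- g has matrix part D
    have hBDB : φ.mat * g.mat
        * ((φ.A⁻¹ : Matrix.GeneralLinearGroup (Fin 3) ℝ) : Matrix (Fin 3) (Fin 3) ℝ) = D := by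
      rw [hgm, hm, hBinv, D_block, blockMat_mul, blockMat_mul]
      rw [show C.map (fun z : ℤ => (z : ℝ)) * (-1) * C⁻¹.map (fun z : ℤ => (z : ℝ))
          = -(C.map (fun z : ℤ => (z : ℝ)) * C⁻¹.map (fun z : ℤ => (z : ℝ))) by
        rw [mul_neg_one, neg_mul], hCr]
      rw [show δ * 1 * δ = δ * δ by ring, hδδ]
    have hcm : (φ * g * φ⁻¹).mat = D := by rw [conj_mat]; exact hBDB
    have hca : (φ * g * φ⁻¹).a
        = φ.a + (blockMat (C.map (fun z : ℤ => (z : ℝ))) δ).mulVec g.a - D.mulVec φ.a := by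
      rw [conj_a, hBDB, hm]
    obtain ⟨z0, hz0⟩ := k0
    obtain ⟨z1, hz1⟩ := k1
    obtain ⟨z2, hz2⟩ := k2
    obtain ⟨w0, hw0⟩ := h0
    obtain ⟨w1, hw1⟩ := h1
    refine Or.inr ⟨hcm, ?_, ?_, ?_⟩
    · rw [hca]
      simp only [Pi.add_apply, Pi.sub_apply]
      rw [mulVec3, mulVec3]
      show II (φ.a 0 + (((C 0 0 : ℤ) : ℝ) * g.a 0 + ((C 0 1 : ℤ) : ℝ) * g.a 1 + 0 * g.a 2)
        - (-1 * φ.a 0 + 0 * φ.a 1 + 0 * φ.a 2))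
      refine ⟨w0 + (C 0 0 * z0 + C 0 1 * z1), ?_⟩
      push_cast
      linear_combination hw0 + ((C 0 0 : ℤ) : ℝ) * hz0 + ((C 0 1 : ℤ) : ℝ) * hz1
    · rw [hca]
      simp only [Pi.add_apply, Pi.sub_apply]
      rw [mulVec3, mulVec3]
      show II (φ.a 1 + (((C 1 0 : ℤ) : ℝ) * g.a 0 + ((C 1 1 : ℤ) : ℝ) * g.a 1 + 0 * g.a 2)
        - (0 * φ.a 0 + -1 * φ.a 1 + 0 * φ.a 2))
      refine ⟨w1 + (C 1 0 * z0 + C 1 1 * z1), ?_⟩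
      push_cast
      linear_combination hw1 + ((C 1 0 : ℤ) : ℝ) * hz0 + ((C 1 1 : ℤ) : ℝ) * hz1
    · rw [hca]
      simp only [Pi.add_apply, Pi.sub_apply]
      rw [mulVec3, mulVec3]
      show II (φ.a 2 + (0 * g.a 0 + 0 * g.a 1 + δ * g.a 2)
        - (0 * φ.a 0 + 0 * φ.a 1 + 1 * φ.a 2) - 1/2)
      rcases hδ with rfl | rfl
      · exact ⟨z2, by rw [← hz2]; ring⟩
      · exact ⟨-z2 - 1, by push_cast; linarith [hz2]⟩

end O32aux

/-- Lemma 9 (normalizer part): the normalizer of `M = ⟨t₁,t₂,t₃, ½e₃ + diag(−1,−1,1)⟩`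
in the group of affinities of `E³` is
`{b + B : 2b₁ ∈ ℤ, 2b₂ ∈ ℤ, B = diag(C, ±1) with C ∈ GL(2,ℤ)}`. -/
theorem O32_normalizer :
    ∀ φ : Aff 3, φ ∈ Subgroup.normalizer (O32.M : Set (Aff 3)) ↔
      ((∃ z : ℤ, 2 * φ.a 0 = (z : ℝ)) ∧ (∃ z : ℤ, 2 * φ.a 1 = (z : ℝ)) ∧
        ∃ C : Matrix (Fin 2) (Fin 2) ℤ, IsUnit C.det ∧
          ∃ δ : ℝ, (δ = 1 ∨ δ = -1) ∧
            Aff.mat φ = blockMat (C.map (fun z : ℤ => (z : ℝ))) δ) := by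
  intro φ
  constructor
  · intro hn
    exact O32aux.normalizer_forward φ hn
  · intro h
    have h' : O32aux.RHSP φ := h
    apply Subgroup.mem_normalizer_iff.mpr
    intro g
    constructor
    · intro hg
      exact (O32aux.mem_M_iff _).mpr (O32aux.conj_MP φ g h' ((O32aux.mem_M_iff g).mp hg))
    · intro hcj
      have h2 := O32aux.conj_MP φ⁻¹ _ (O32aux.RHSP_inv φ h') ((O32aux.mem_M_iff _).mp hcj)
      have e : φ⁻¹ * (φ * g * φ⁻¹) * φ⁻¹⁻¹ = g := by group
      rw [e] at h2
      exact (O32aux.mem_M_iff g).mpr h2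
end
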